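/- arXiv:1403.5624 — 9 statements merged into one kernel-verified Lean document; each statement's English description precedes it below -/
import Mathlib

section
/- Let ρ(x,t) = (4π(s−t))^{−(n−1)/2} exp(−|x−y|²/(4(s−t))) for fixed y ∈ ℝⁿ and s > t. Then for any unit vector a ∈ ℝⁿ, the identity (a·∇ρ)²/ρ + (I − a⊗a)·∇²ρ + ∂ₜρ = 0 holds, where ∇ and ∇² are taken in x, and A·B denotes the sum of entrywise products of matrices. -/
/-!
With `τ = s - t` and `u = x - y`, the kernel at a fixed time is a Gaussian in `x`, so
`∇ρ = -ρ u / (2τ)`, `∇²ρ = ρ (u ⊗ u / (4τ²) - I / (2τ))` and `∂ₜρ = ρ ((n-1) / (2τ) - |u|² / (4τ²))`.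
Pairing the Hessian with `I - a ⊗ a` gives `ρ (|u|² - (a·u)²) / (4τ²) - ρ (n-1) / (2τ)`:
its `(a·u)²` term cancels `(a·∇ρ)²/ρ` and the rest cancels `∂ₜρ`.
-/

open scoped RealInnerProductSpace

noncomputable def scaledGaussian {E : Type*} [NormedAddCommGroup E] (C k : ℝ) (y z : E) : ℝ :=
  C * Real.exp (-k * ‖z - y‖ ^ 2)

section Gaussian

variable {E : Type*} [NormedAddCommGroup E] [InnerProductSpace ℝ E] (C k : ℝ) (y : E)

theorem hasFDerivAt_scaledGaussian (z : E) :
    HasFDerivAt (scaledGaussian C k y)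
      ((-2 * k * scaledGaussian C k y z) • innerSL ℝ (z - y)) z := by
  have h := ((((hasFDerivAt_id z).sub_const y).norm_sq.const_mul (-k)).exp).const_mul C
  refine h.congr_fderiv ?_
  ext v
  simp [scaledGaussian]
  ring

theorem fderiv_scaledGaussian_apply (z v : E) :
    fderiv ℝ (scaledGaussian C k y) z v = -2 * k * scaledGaussian C k y z * ⟪z - y, v⟫ := by
  simp [(hasFDerivAt_scaledGaussian C k y z).fderiv, inner_sub_left]

theorem fderiv_fderiv_scaledGaussian_apply (x v w : E) :
    fderiv ℝ (fun z => fderiv ℝ (scaledGaussian C k y) z v) x w =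
      scaledGaussian C k y x * (4 * k ^ 2 * ⟪x - y, v⟫ * ⟪x - y, w⟫ - 2 * k * ⟪w, v⟫) := by
  simp_rw [fderiv_scaledGaussian_apply]
  have h : HasFDerivAt (fun z => -2 * k * scaledGaussian C k y z * ⟪z - y, v⟫) _ x :=
    ((hasFDerivAt_scaledGaussian C k y x).const_mul (-2 * k)).mul
      (((hasFDerivAt_id x).sub_const y).inner ℝ (hasFDerivAt_const v x))
  rw [h.fderiv]
  simp [fderivInnerCLM_apply, inner_sub_left]
  ring

end Gaussian

theorem sum_sum_id_sub_outer_mul_outer_sub_id (n : ℕ) (u a : EuclideanSpace ℝ (Fin n)) (α β : ℝ) :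
    ∑ i, ∑ j, ((if i = j then (1 : ℝ) else 0) - a i * a j) *
        (α * (u i * u j) - β * (if i = j then 1 else 0)) =
      α * (‖u‖ ^ 2 - ⟪u, a⟫ ^ 2) - β * (n - ‖a‖ ^ 2) := by
  have hcross : ∑ i, ∑ j, a i * a j * (α * (u i * u j)) = α * ⟪u, a⟫ ^ 2 := by
    rw [real_inner_comm, EuclideanSpace.inner_eq_star_dotProduct, sq, dotProduct, Finset.sum_mul_sum,
      Finset.mul_sum]
    refine Finset.sum_congr rfl fun i _ => ?_
    rw [Finset.mul_sum]
    exact Finset.sum_congr rfl fun j _ => by simp; ring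
  simp only [sub_mul, mul_sub, Finset.sum_sub_distrib, hcross, ite_mul, one_mul, zero_mul, mul_one,
    mul_ite, mul_zero, Finset.sum_ite_eq, Finset.mem_univ, if_true, Finset.sum_const, Finset.card_univ,
    Fintype.card_fin, nsmul_eq_mul, ← sq, ← Finset.sum_mul, ← Finset.mul_sum]
  rw [EuclideanSpace.real_norm_sq_eq, EuclideanSpace.real_norm_sq_eq]
  ring

theorem sum_sum_id_sub_outer_mul_hessian_scaledGaussian (n : ℕ) (C k : ℝ)
    (y x a : EuclideanSpace ℝ (Fin n)) :
    ∑ i : Fin n, ∑ j : Fin n, ((if i = j then (1 : ℝ) else 0) - a i * a j) *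
        fderiv ℝ (fun z => fderiv ℝ (scaledGaussian C k y) z (EuclideanSpace.single j 1)) x
          (EuclideanSpace.single i 1) =
      scaledGaussian C k y x *
        (4 * k ^ 2 * (‖x - y‖ ^ 2 - ⟪x - y, a⟫ ^ 2) - 2 * k * (n - ‖a‖ ^ 2)) := by
  refine (Finset.sum_congr rfl fun i _ => Finset.sum_congr rfl fun j _ => ?_).trans
    ((sum_sum_id_sub_outer_mul_outer_sub_id n (x - y) a (scaledGaussian C k y x * (4 * k ^ 2))
      (scaledGaussian C k y x * (2 * k))).trans (by ring))
  simp only [fderiv_fderiv_scaledGaussian_apply, EuclideanSpace.inner_single_right,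
    PiLp.single_apply, conj_trivial, one_mul, @eq_comm _ j i]
  ring

theorem hasDerivAt_heatKernel_time (p Q s t : ℝ) (ht : t < s) :
    HasDerivAt (fun τ => (4 * Real.pi * (s - τ)) ^ p * Real.exp (-Q / (4 * (s - τ))))
      ((4 * Real.pi * (s - t)) ^ p * Real.exp (-Q / (4 * (s - t))) *
        (-p / (s - t) - Q / (4 * (s - t) ^ 2))) t := by
  have hst : 0 < s - t := sub_pos.2 ht
  have hσ : HasDerivAt (fun τ => s - τ) (-1) t := (hasDerivAt_id t).const_sub s
  have hpow := (hσ.const_mul (4 * Real.pi)).rpow_const (p := p) (Or.inl (by positivity))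
  have hexp := ((hasDerivAt_const t (-Q)).fun_div (hσ.const_mul 4) (by positivity)).exp
  refine (hpow.mul hexp).congr_deriv ?_
  rw [Real.rpow_sub (by positivity), Real.rpow_one]
  field_simp
  ring

theorem backward_heat_kernel_identity_general
    (n : ℕ) (y : EuclideanSpace ℝ (Fin n)) (s : ℝ)
    (ρ : EuclideanSpace ℝ (Fin n) → ℝ → ℝ)
    (hρ : ∀ x t, ρ x t =
      (4 * Real.pi * (s - t)) ^ (-(((n : ℝ) - 1) / 2)) *
        Real.exp (-‖x - y‖ ^ 2 / (4 * (s - t))))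
    (x : EuclideanSpace ℝ (Fin n)) (t : ℝ) (ht : t < s)
    (a : EuclideanSpace ℝ (Fin n)) (ha : ‖a‖ = 1) :
    (fderiv ℝ (fun z => ρ z t) x a) ^ 2 / ρ x t +
      (∑ i : Fin n, ∑ j : Fin n,
        ((if i = j then (1 : ℝ) else 0) - a i * a j) *
          fderiv ℝ (fun z => fderiv ℝ (fun w => ρ w t) z (EuclideanSpace.single j 1)) x
            (EuclideanSpace.single i 1)) +
      deriv (fun τ => ρ x τ) t = 0 := by
  have hspace : (fun z => ρ z t) =
      scaledGaussian ((4 * Real.pi * (s - t)) ^ (-(((n : ℝ) - 1) / 2))) (4 * (s - t))⁻¹ y := by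
    funext z
    rw [hρ, scaledGaussian]
    ring_nf
  have hpos : 0 < ρ x t := by
    rw [hρ]
    positivity
  have htime := hasDerivAt_heatKernel_time (-(((n : ℝ) - 1) / 2)) (‖x - y‖ ^ 2) s t ht
  simp_rw [← hρ x] at htime
  rw [hspace, sum_sum_id_sub_outer_mul_hessian_scaledGaussian, fderiv_scaledGaussian_apply,
    ← hspace, htime.deriv, ha]
  field_simp
  ring

theorem backward_heat_kernel_identity
    (n : ℕ) (hn : 2 ≤ n) (y : EuclideanSpace ℝ (Fin n)) (s : ℝ)
    (ρ : EuclideanSpace ℝ (Fin n) → ℝ → ℝ)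
    (hρ : ∀ x t, ρ x t =
      (4 * Real.pi * (s - t)) ^ (-(((n : ℝ) - 1) / 2)) *
        Real.exp (-‖x - y‖ ^ 2 / (4 * (s - t))))
    (x : EuclideanSpace ℝ (Fin n)) (t : ℝ) (ht : t < s)
    (a : EuclideanSpace ℝ (Fin n)) (ha : ‖a‖ = 1) :
    (fderiv ℝ (fun z => ρ z t) x a) ^ 2 / ρ x t +
      (∑ i : Fin n, ∑ j : Fin n,
        ((if i = j then (1 : ℝ) else 0) - a i * a j) *
          fderiv ℝ (fun z => fderiv ℝ (fun w => ρ w t) z (EuclideanSpace.single j 1)) x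
            (EuclideanSpace.single i 1)) +
      deriv (fun τ => ρ x τ) t = 0 :=
  backward_heat_kernel_identity_general n y s ρ hρ x t ht a ha
end

section
/- Let Ω ⊂ ℝⁿ be a bounded domain with smooth boundary and let u ∈ C²(closure of Ω) satisfy the Neumann condition ∇u·ν = 0 on ∂Ω, where ν is the outer unit normal. Then at each point x ∈ ∂Ω, the outward normal derivative of |∇u|² equals 2 B_x(∇u, ∇u), where B_x is the second fundamental form of ∂Ω at x (with respect to the outer normal). -/
open scoped RealInnerProductSpace Topology
open Filter

theorem tangent_fderiv_eq_zero {E : Type*} [NormedAddCommGroup E] [NormedSpace ℝ E]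
    [CompleteSpace E] {f : E → ℝ} {f' : E →L[ℝ] ℝ} {a : E}
    (hf : HasStrictFDerivAt f f' a) (hf' : f'.range = ⊤)
    {h : E → ℝ} {h' : E →L[ℝ] ℝ} (hh : HasFDerivAt h h' a)
    (hzero : ∀ y, f y = f a → h y = 0) {v : E} (hv : f' v = 0) : h' v = 0 := by
  set ψ := hf.implicitFunction f f' hf' (f a) with hψdef
  have hψ0 : ψ 0 = a := hf.implicitFunction_apply_image hf'
  have hd : HasStrictFDerivAt ψ (f'.ker).subtypeL 0 := hf.to_implicitFunction hf'
  have hev : ∀ᶠ y in 𝓝 (0 : f'.ker), f (ψ y) = f a := by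
    have ht : Filter.Tendsto (fun y : f'.ker => ((f a : ℝ), y)) (𝓝 0)
        (𝓝 (f a, (0 : f'.ker))) :=
      tendsto_const_nhds.prodMk_nhds tendsto_id
    exact ht.eventually (hf.map_implicitFunction_eq hf')
  have hev2 : (fun _ : f'.ker => (0 : ℝ)) =ᶠ[𝓝 0] fun y => h (ψ y) :=
    (hev.mono fun y hy => (hzero _ hy).symm)
  have hC : HasFDerivAt (fun y => h (ψ y)) (h'.comp (f'.ker).subtypeL) 0 := by
    have hh' : HasFDerivAt h h' (ψ 0) := hψ0 ▸ hh
    exact hh'.comp 0 hd.hasFDerivAt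
  have h0 : HasFDerivAt (fun _ : f'.ker => (0 : ℝ)) (0 : f'.ker →L[ℝ] ℝ) 0 := hasFDerivAt_const 0 0
  have heq : h'.comp (f'.ker).subtypeL = 0 :=
    (hC.congr_of_eventuallyEq hev2).unique h0
  have := congrArg (fun L : f'.ker →L[ℝ] ℝ => L ⟨v, hv⟩) heq
  simpa using this

/- STATEMENT 1: for a bounded smooth domain Ω (encoded as a regular sublevel set of a smooth
function f, with outer unit normal ν = ∇f/|∇f|) and u ∈ C² satisfying the Neumann condition
∇u·ν = 0 on ∂Ω, at each x ∈ ∂Ω the outward normal derivative of |∇u|² equals 2 B_x(∇u,∇u),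
where the second fundamental form (w.r.t. the outer normal) is B_x(X,Y) = −⟪(Dν)X, Y⟫. -/
theorem normal_derivative_grad_sq_eq_second_fundamental_form
    (n : ℕ) (hn : 2 ≤ n) (Ω : Set (EuclideanSpace ℝ (Fin n)))
    (hΩbd : Bornology.IsBounded Ω)
    (f : EuclideanSpace ℝ (Fin n) → ℝ) (hf : ContDiff ℝ (⊤ : ℕ∞) f)
    (hΩ : Ω = {x | f x < 0})
    (hfr : frontier Ω = {x | f x = 0})
    (hreg : ∀ x ∈ frontier Ω, gradient f x ≠ 0)
    (ν : EuclideanSpace ℝ (Fin n) → EuclideanSpace ℝ (Fin n))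
    (hν : ∀ x, ν x = ‖gradient f x‖⁻¹ • gradient f x)
    (u : EuclideanSpace ℝ (Fin n) → ℝ) (hu : ContDiff ℝ 2 u)
    (hNeu : ∀ x ∈ frontier Ω, ⟪gradient u x, ν x⟫ = 0)
    (x : EuclideanSpace ℝ (Fin n)) (hx : x ∈ frontier Ω) :
    fderiv ℝ (fun w => ‖gradient u w‖ ^ 2) x (ν x) =
      2 * (-⟪fderiv ℝ ν x (gradient u x), gradient u x⟫) := by
  have hx0 : f x = 0 := by rw [hfr] at hx; exact hx
  have hpx : gradient f x ≠ 0 := hreg x hx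
  have hpxn : ‖gradient f x‖⁻¹ ≠ 0 := inv_ne_zero (norm_ne_zero_iff.2 hpx)
  -- differentiability facts
  have hu1 : ContDiff ℝ 1 (fderiv ℝ u) := hu.fderiv_right (by norm_num)
  have hf1 : ContDiff ℝ 1 (fderiv ℝ f) := hf.fderiv_right (by exact WithTop.coe_le_coe.2 le_top)
  have hgu : Differentiable ℝ (gradient u) := by
    have h1 : gradient u = (InnerProductSpace.toDual ℝ _).symm ∘ (fderiv ℝ u) := rfl
    rw [h1]
    exact (InnerProductSpace.toDual ℝ _).symm.differentiable.comp (hu1.differentiable one_ne_zero)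
  have hgf : Differentiable ℝ (gradient f) := by
    have h1 : gradient f = (InnerProductSpace.toDual ℝ _).symm ∘ (fderiv ℝ f) := rfl
    rw [h1]
    exact (InnerProductSpace.toDual ℝ _).symm.differentiable.comp (hf1.differentiable one_ne_zero)
  -- ⟪gradient, v⟫ = fderiv
  have hgrfd : ∀ (φ : EuclideanSpace ℝ (Fin n) → ℝ) (y v : EuclideanSpace ℝ (Fin n)),
      ⟪gradient φ y, v⟫ = fderiv ℝ φ y v := fun φ y v => InnerProductSpace.toDual_symm_apply
  -- fderiv of gradient vs second fderiv
  have hkey : ∀ (φ : EuclideanSpace ℝ (Fin n) → ℝ) (v w : EuclideanSpace ℝ (Fin n)),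
      ⟪fderiv ℝ (gradient φ) x v, w⟫ = fderiv ℝ (fderiv ℝ φ) x v w := by
    intro φ v w
    have h1 : gradient φ = (InnerProductSpace.toDual ℝ _).symm ∘ (fderiv ℝ φ) := rfl
    rw [h1, LinearIsometryEquiv.comp_fderiv]
    simp only [ContinuousLinearMap.coe_comp', Function.comp_apply, LinearIsometryEquiv.coe_coe]
    exact InnerProductSpace.toDual_symm_apply
  -- Neumann condition in terms of gradients
  have hN : ∀ y, f y = 0 → ⟪gradient u y, gradient f y⟫ = 0 := by
    intro y hy
    have hyfr : y ∈ frontier Ω := by rw [hfr]; exact hy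
    have h2 := hNeu y hyfr
    rw [hν y, real_inner_smul_right] at h2
    have hne : ‖gradient f y‖⁻¹ ≠ 0 := inv_ne_zero (norm_ne_zero_iff.2 (hreg y hyfr))
    exact (mul_eq_zero.1 h2).resolve_left hne
  have hNx : ⟪gradient u x, gradient f x⟫ = 0 := hN x hx0
  -- tangency
  have htang : fderiv ℝ f x (gradient u x) = 0 := by
    rw [← hgrfd f x, real_inner_comm]; exact hNx
  -- strict derivative and surjectivity of fderiv f x
  have hstrict : HasStrictFDerivAt f (fderiv ℝ f x) x :=
    hf.contDiffAt.hasStrictFDerivAt (by simp)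
  have hsurj : (fderiv ℝ f x).range = ⊤ := by
    rw [LinearMap.range_eq_top]
    intro c
    have hne : fderiv ℝ f x (gradient f x) ≠ 0 := by
      rw [← hgrfd f x, real_inner_self_eq_norm_sq]
      exact pow_ne_zero 2 (norm_ne_zero_iff.2 hpx)
    exact ⟨(c / fderiv ℝ f x (gradient f x)) • gradient f x, by
      simp [div_mul_cancel₀ c hne]⟩
  -- the key cancellation from differentiating the Neumann condition tangentially
  have hdh : DifferentiableAt ℝ (fun w => ⟪gradient u w, gradient f w⟫) x :=
    (hgu x).inner ℝ (hgf x)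
  have hcancel : ⟪gradient u x, fderiv ℝ (gradient f) x (gradient u x)⟫ +
      ⟪fderiv ℝ (gradient u) x (gradient u x), gradient f x⟫ = 0 := by
    have h3 := tangent_fderiv_eq_zero hstrict hsurj hdh.hasFDerivAt
      (fun y hy => hN y (by rwa [hx0] at hy)) htang
    rwa [fderiv_inner_apply ℝ (hgu x) (hgf x)] at h3
  -- symmetry of the Hessian of u
  have hsymm : IsSymmSndFDerivAt ℝ u x := hu.contDiffAt.isSymmSndFDerivAt (by norm_num)
  -- rewrite the LHS
  have hLHS : fderiv ℝ (fun w => ‖gradient u w‖ ^ 2) x (ν x) =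
      2 * ⟪fderiv ℝ (gradient u) x (ν x), gradient u x⟫ := by
    have h1 : (fun w => ‖gradient u w‖ ^ 2) =
        fun w => ⟪gradient u w, gradient u w⟫ := by
      funext w; rw [real_inner_self_eq_norm_sq]
    rw [h1, fderiv_inner_apply ℝ (hgu x) (hgu x),
      real_inner_comm (fderiv ℝ (gradient u) x (ν x)) (gradient u x)]
    ring
  -- use Hessian symmetry to move ν
  have hswap : ⟪fderiv ℝ (gradient u) x (ν x), gradient u x⟫ =
      ⟪fderiv ℝ (gradient u) x (gradient u x), ν x⟫ := by
    rw [hkey u, hkey u, hsymm (ν x) (gradient u x)]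
  -- compute fderiv ν
  have hc : DifferentiableAt ℝ (fun w => ‖gradient f w‖⁻¹) x :=
    ((hgf x).norm ℝ hpx).inv (norm_ne_zero_iff.2 hpx)
  have hνfun : ν = fun w => (fun w => ‖gradient f w‖⁻¹) w • gradient f w := by
    funext w; exact hν w
  have hRHS : ⟪fderiv ℝ ν x (gradient u x), gradient u x⟫ =
      ‖gradient f x‖⁻¹ * ⟪fderiv ℝ (gradient f) x (gradient u x), gradient u x⟫ := by
    rw [hνfun, fderiv_fun_smul hc (hgf x)]
    simp only [ContinuousLinearMap.add_apply, ContinuousLinearMap.coe_smul',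
      Pi.smul_apply, ContinuousLinearMap.smulRight_apply]
    rw [inner_add_left, real_inner_smul_left, real_inner_smul_left,
      real_inner_comm (gradient u x) (gradient f x), hNx]
    ring
  rw [hLHS, hswap, hν x, real_inner_smul_right, hRHS]
  have hfin : ⟪fderiv ℝ (gradient u) x (gradient u x), gradient f x⟫ =
      -⟪fderiv ℝ (gradient f) x (gradient u x), gradient u x⟫ := by
    have := hcancel
    rw [real_inner_comm (fderiv ℝ (gradient f) x (gradient u x)) (gradient u x)] at this
    linarith
  rw [hfin]; ring
end

section
/- Let Ω ⊂ ℝⁿ be a bounded convex domain with smooth boundary and let u ∈ C²(closure of Ω) satisfy ∇u·ν = 0 on ∂Ω. Then the outward normal derivative of |∇u|² is nonpositive at every boundary point. If moreover Ω is strictly convex (all principal curvatures of ∂Ω are positive) and the normal derivative of |∇u|² vanishes at x ∈ ∂Ω, then ∇u(x) = 0. -/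
open scoped RealInnerProductSpace

open Filter Topology


/-- Curve in a level set with prescribed tangent vector. -/
lemma exists_level_curve {E : Type*} [NormedAddCommGroup E] [NormedSpace ℝ E] [CompleteSpace E]
    {f : E → ℝ} {f' : E →L[ℝ] ℝ} {a : E} (hf : HasStrictFDerivAt f f' a)
    (hsurj : LinearMap.range (f' : E →ₗ[ℝ] ℝ) = ⊤) {X : E} (hX : f' X = 0) :
    ∃ ψ : ℝ → E, ψ 0 = a ∧ HasDerivAt ψ X 0 ∧ ∀ᶠ t in 𝓝 (0:ℝ), f (ψ t) = f a := by
  set X' : LinearMap.ker (f' : E →ₗ[ℝ] ℝ) := ⟨X, hX⟩ with hX'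
  refine ⟨fun t => hf.implicitFunction f f' hsurj (f a) (t • X'), ?_, ?_, ?_⟩
  · simpa using hf.implicitFunction_apply_image hsurj
  · have h1 := hf.to_implicitFunction hsurj
    have h2 : HasDerivAt (fun t : ℝ => t • X') X' 0 := by
      simpa using (hasDerivAt_id (0:ℝ)).smul_const X'
    have h0 : (0:ℝ) • X' = 0 := by simp
    have h3 := (h0 ▸ h1.hasFDerivAt : HasFDerivAt _ _ ((0:ℝ) • X')).comp_hasDerivAt 0 h2
    simpa [Function.comp_def, hX'] using h3
  · have h4 := hf.map_implicitFunction_eq hsurj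
    have ht : Tendsto (fun t : ℝ => ((f a), t • X')) (𝓝 0)
        (𝓝 ((f a), (0 : LinearMap.ker (f' : E →ₗ[ℝ] ℝ)))) := by
      refine (tendsto_const_nhds.prodMk_nhds ?_)
      have hc : Continuous (fun t : ℝ => t • X') := continuous_id.smul continuous_const
      have := hc.tendsto 0
      simpa using this
    filter_upwards [ht.eventually h4] with t h using h

/-- If `g` vanishes on the level set of `f` through `a`, then the derivative of `g`
vanishes in tangent directions. -/
lemma fderiv_eq_zero_of_vanish_level {E : Type*} [NormedAddCommGroup E] [NormedSpace ℝ E]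
    [CompleteSpace E] {f : E → ℝ} {a : E} (hf : HasStrictFDerivAt f (fderiv ℝ f a) a)
    (hsurj : LinearMap.range (fderiv ℝ f a : E →ₗ[ℝ] ℝ) = ⊤) {X : E} (hX : fderiv ℝ f a X = 0)
    {g : E → ℝ} (hg : DifferentiableAt ℝ g a) (h0 : ∀ y, f y = f a → g y = 0) :
    fderiv ℝ g a X = 0 := by
  obtain ⟨ψ, hψ0, hψd, hψf⟩ := exists_level_curve hf hsurj hX
  have h1 : HasDerivAt (fun t => g (ψ t)) (fderiv ℝ g a X) 0 := by
    have hg' : HasFDerivAt g (fderiv ℝ g a) (ψ 0) := by rw [hψ0]; exact hg.hasFDerivAt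
    have := hg'.comp_hasDerivAt 0 hψd
    simpa [Function.comp_def] using this
  have h2 : (fun t => g (ψ t)) =ᶠ[𝓝 (0:ℝ)] fun _ => (0:ℝ) := by
    filter_upwards [hψf] with t h using h0 _ h
  have h3 : HasDerivAt (fun t => g (ψ t)) 0 0 :=
    (hasDerivAt_const (0:ℝ) (0:ℝ)).congr_of_eventuallyEq h2
  exact h1.unique h3

lemma inner_fderiv_nonneg_of_eventually {E : Type*} [NormedAddCommGroup E]
    [InnerProductSpace ℝ E] {ν : E → E} {ψ : ℝ → E} {a X : E}
    (hψ0 : ψ 0 = a) (hψd : HasDerivAt ψ X 0) (hν : DifferentiableAt ℝ ν a)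
    (hmono : ∀ᶠ t in 𝓝 (0:ℝ), 0 ≤ ⟪ν (ψ t) - ν a, ψ t - a⟫) :
    0 ≤ ⟪fderiv ℝ ν a X, X⟫ := by
  have hA : HasDerivAt (fun t => ν (ψ t)) (fderiv ℝ ν a X) 0 := by
    have hν' : HasFDerivAt ν (fderiv ℝ ν a) (ψ 0) := by rw [hψ0]; exact hν.hasFDerivAt
    have := hν'.comp_hasDerivAt 0 hψd
    simpa [Function.comp_def] using this
  have sA := hasDerivAt_iff_tendsto_slope.mp hA
  have sB := hasDerivAt_iff_tendsto_slope.mp hψd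
  have T : Tendsto (fun t => ⟪slope (fun s => ν (ψ s)) 0 t, slope ψ 0 t⟫)
      (𝓝[≠] (0:ℝ)) (𝓝 ⟪fderiv ℝ ν a X, X⟫) := sA.inner sB
  refine ge_of_tendsto T ?_
  filter_upwards [self_mem_nhdsWithin, nhdsWithin_le_nhds hmono] with t ht hm
  have h1 : slope (fun s => ν (ψ s)) 0 t = t⁻¹ • (ν (ψ t) - ν a) := by
    rw [slope_def_module]; simp [hψ0]
  have h2 : slope ψ 0 t = t⁻¹ • (ψ t - a) := by
    rw [slope_def_module]; simp [hψ0]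
  rw [h1, h2, real_inner_smul_left, real_inner_smul_right, ← mul_assoc]
  exact mul_nonneg (mul_self_nonneg t⁻¹) hm

lemma inner_gradient_apply {E : Type*} [NormedAddCommGroup E] [InnerProductSpace ℝ E]
    [CompleteSpace E] (f : E → ℝ) (p v : E) : ⟪gradient f p, v⟫ = fderiv ℝ f p v := by
  rw [gradient]
  exact InnerProductSpace.toDual_symm_apply

lemma support_hyperplane {E : Type*} [NormedAddCommGroup E] [InnerProductSpace ℝ E]
    [CompleteSpace E] {f : E → ℝ} {p : E} (hfd : DifferentiableAt ℝ f p)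
    {s : Set E} (hs : Convex ℝ s) (hle : ∀ y ∈ s, f y ≤ 0)
    (hp : p ∈ s) (hfp : f p = 0) {z : E} (hz : z ∈ s) :
    ⟪gradient f p, z - p⟫ ≤ 0 := by
  rw [inner_gradient_apply]
  have hc : HasDerivAt (fun t : ℝ => p + t • (z - p)) (z - p) 0 := by
    simpa using ((hasDerivAt_id (0:ℝ)).smul_const (z - p)).const_add p
  have hf' : HasFDerivAt f (fderiv ℝ f p) ((fun t : ℝ => p + t • (z - p)) 0) := by
    simpa using hfd.hasFDerivAt
  have hder : HasDerivAt (fun t : ℝ => f (p + t • (z - p))) (fderiv ℝ f p (z - p)) 0 := by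
    have := hf'.comp_hasDerivAt 0 hc
    simpa [Function.comp_def] using this
  have hslope := hasDerivAt_iff_tendsto_slope.mp hder
  have hmono : 𝓝[>] (0:ℝ) ≤ 𝓝[≠] (0:ℝ) :=
    nhdsWithin_mono 0 (fun x hx => ne_of_gt hx)
  refine le_of_tendsto (hslope.mono_left hmono) ?_
  filter_upwards [Ioc_mem_nhdsGT_of_mem (Set.mem_Ico.mpr ⟨le_refl (0:ℝ), one_pos⟩)]
    with t ht
  have hmem : p + t • (z - p) ∈ s := by
    have h1 : p + t • (z - p) = (1 - t) • p + t • z := by module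
    rw [h1]
    exact hs hp hz (by linarith [ht.2]) (le_of_lt ht.1) (by ring)
  have hft : f (p + t • (z - p)) ≤ 0 := hle _ hmem
  rw [slope_def_module]
  simp only [sub_zero, zero_smul, add_zero, hfp, smul_eq_mul]
  have h0 : (0:ℝ) ≤ t⁻¹ := inv_nonneg.mpr (le_of_lt ht.1)
  nlinarith

lemma gradient_hasFDerivAt {E : Type*} [NormedAddCommGroup E] [InnerProductSpace ℝ E]
    [CompleteSpace E] {u : E → ℝ} (hu : ContDiff ℝ 2 u) (x : E) :
    ∃ D : E →L[ℝ] E, HasFDerivAt (gradient u) D x ∧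
      ∀ v y : E, ⟪D v, y⟫ = fderiv ℝ (fderiv ℝ u) x v y := by
  have hD2 : HasFDerivAt (fderiv ℝ u) (fderiv ℝ (fderiv ℝ u) x) x := by
    have h1 : ContDiff ℝ 1 (fderiv ℝ u) := hu.fderiv_right (by norm_num)
    exact ((h1.differentiable (by norm_num)) x).hasFDerivAt
  set L := ((InnerProductSpace.toDual ℝ E).symm.toContinuousLinearEquiv :
    (E →L[ℝ] ℝ) ≃L[ℝ] E).toContinuousLinearMap with hL
  refine ⟨L.comp (fderiv ℝ (fderiv ℝ u) x), ?_, ?_⟩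
  · have hgr : gradient u = fun w => L (fderiv ℝ u w) := by
      funext w; rfl
    rw [hgr]
    exact (L.hasFDerivAt).comp x hD2
  · intro v y
    simp only [ContinuousLinearMap.coe_comp', Function.comp_apply, hL,
      ContinuousLinearEquiv.coe_coe, LinearIsometryEquiv.coe_toContinuousLinearEquiv]
    exact InnerProductSpace.toDual_symm_apply

lemma inner_fderiv_gradient_symm {E : Type*} [NormedAddCommGroup E] [InnerProductSpace ℝ E]
    [CompleteSpace E] {u : E → ℝ} (hu : ContDiff ℝ 2 u) (x v y : E) :
    ⟪fderiv ℝ (gradient u) x v, y⟫ = ⟪fderiv ℝ (gradient u) x y, v⟫ := by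
  obtain ⟨D, hD, hDinner⟩ := gradient_hasFDerivAt hu x
  rw [hD.fderiv, hDinner, hDinner]
  have hD2 : HasFDerivAt (fderiv ℝ u) (fderiv ℝ (fderiv ℝ u) x) x := by
    have h1 : ContDiff ℝ 1 (fderiv ℝ u) := hu.fderiv_right (by norm_num)
    exact ((h1.differentiable (by norm_num)) x).hasFDerivAt
  exact second_derivative_symmetric
    (fun z => ((hu.differentiable (by norm_num)) z).hasFDerivAt) hD2 v y

/- STATEMENT 2: for a bounded convex smooth domain Ω (regular sublevel set of smooth f, outer
unit normal ν = ∇f/|∇f|) and u ∈ C² with Neumann condition ∇u·ν = 0 on ∂Ω, the outward normal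
derivative of |∇u|² is nonpositive at every boundary point; if moreover Ω is strictly convex
(all principal curvatures of ∂Ω positive, i.e. ⟪(Dν)X, X⟫ > 0 for nonzero tangent vectors X)
and this normal derivative vanishes at x ∈ ∂Ω, then ∇u(x) = 0. -/
theorem normal_derivative_grad_sq_nonpos_of_convex
    (n : ℕ) (hn : 2 ≤ n) (Ω : Set (EuclideanSpace ℝ (Fin n)))
    (hΩbd : Bornology.IsBounded Ω) (hconv : Convex ℝ Ω)
    (f : EuclideanSpace ℝ (Fin n) → ℝ) (hf : ContDiff ℝ (⊤ : ℕ∞) f)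
    (hΩ : Ω = {x | f x < 0})
    (hfr : frontier Ω = {x | f x = 0})
    (hreg : ∀ x ∈ frontier Ω, gradient f x ≠ 0)
    (ν : EuclideanSpace ℝ (Fin n) → EuclideanSpace ℝ (Fin n))
    (hν : ∀ x, ν x = ‖gradient f x‖⁻¹ • gradient f x)
    (u : EuclideanSpace ℝ (Fin n) → ℝ) (hu : ContDiff ℝ 2 u)
    (hNeu : ∀ x ∈ frontier Ω, ⟪gradient u x, ν x⟫ = 0)
    (x : EuclideanSpace ℝ (Fin n)) (hx : x ∈ frontier Ω) :
    fderiv ℝ (fun w => ‖gradient u w‖ ^ 2) x (ν x) ≤ 0 ∧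
      ((∀ x' ∈ frontier Ω, ∀ X : EuclideanSpace ℝ (Fin n),
          ⟪X, ν x'⟫ = 0 → X ≠ 0 → 0 < ⟪fderiv ℝ ν x' X, X⟫) →
        fderiv ℝ (fun w => ‖gradient u w‖ ^ 2) x (ν x) = 0 → gradient u x = 0) := by
  classical
  -- basic facts
  have hfrf : ∀ y ∈ frontier Ω, f y = 0 := fun y hy => by
    have : y ∈ {x | f x = 0} := hfr ▸ hy
    exact this
  have hfrf' : ∀ y : EuclideanSpace ℝ (Fin n), f y = 0 → y ∈ frontier Ω := fun y hy => by
    rw [hfr]; exact hy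
  have hΩopen : IsOpen Ω := by
    rw [hΩ]; exact isOpen_lt hf.continuous continuous_const
  have hclle : ∀ y ∈ closure Ω, f y ≤ 0 := by
    intro y hy
    rw [closure_eq_interior_union_frontier] at hy
    rcases hy with hy | hy
    · have : y ∈ Ω := interior_subset hy
      rw [hΩ] at this; exact le_of_lt this
    · exact le_of_eq (hfrf y hy)
  have hcc : Convex ℝ (closure Ω) := hconv.closure
  have hfrcl : frontier Ω ⊆ closure Ω := frontier_subset_closure
  -- supporting hyperplane
  have hsupp : ∀ p ∈ frontier Ω, ∀ z ∈ closure Ω, ⟪ν p, z - p⟫ ≤ 0 := by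
    intro p hp z hz
    have h1 : ⟪gradient f p, z - p⟫ ≤ 0 :=
      support_hyperplane ((hf.differentiable (by simp)) p) hcc hclle (hfrcl hp) (hfrf p hp) hz
    rw [hν p, real_inner_smul_left]
    exact mul_nonpos_of_nonneg_of_nonpos (by positivity) h1
  -- monotonicity of the normal
  have hmono : ∀ p ∈ frontier Ω, ∀ q ∈ frontier Ω, 0 ≤ ⟪ν q - ν p, q - p⟫ := by
    intro p hp q hq
    have h1 : ⟪ν p, q - p⟫ ≤ 0 := hsupp p hp q (hfrcl hq)
    have h2 : ⟪ν q, p - q⟫ ≤ 0 := hsupp q hq p (hfrcl hp)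
    have h3 : ⟪ν q, q - p⟫ = -⟪ν q, p - q⟫ := by
      rw [← inner_neg_right, neg_sub]
    rw [inner_sub_left, h3]
    linarith
  -- data at x
  have hGx : gradient f x ≠ 0 := hreg x hx
  have hstrict : HasStrictFDerivAt f (fderiv ℝ f x) x :=
    (hf.contDiffAt).hasStrictFDerivAt (by simp)
  have hsurj : LinearMap.range (fderiv ℝ f x : EuclideanSpace ℝ (Fin n) →ₗ[ℝ] ℝ) = ⊤ := by
    rw [LinearMap.range_eq_top]
    intro c
    refine ⟨(c / ⟪gradient f x, gradient f x⟫) • gradient f x, ?_⟩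
    have hne : ⟪gradient f x, gradient f x⟫ ≠ (0:ℝ) := by
      rw [real_inner_self_eq_norm_sq]
      exact pow_ne_zero 2 (norm_ne_zero_iff.mpr hGx)
    rw [ContinuousLinearMap.coe_coe, ← inner_gradient_apply, real_inner_smul_right, div_mul_cancel₀ _ hne]
  -- differentiability of ν at x
  have hgfd : DifferentiableAt ℝ (gradient f) x := by
    have : ContDiff ℝ 2 f := hf.of_le (by exact WithTop.coe_le_coe.mpr (le_top : (2:ℕ∞) ≤ ⊤))
    exact (gradient_hasFDerivAt this x).choose_spec.1.differentiableAt
  have hνdiff : DifferentiableAt ℝ ν x := by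
    have hν_eq : ν = fun w => ‖gradient f w‖⁻¹ • gradient f w := funext hν
    rw [hν_eq]
    exact ((hgfd.norm ℝ hGx).inv (norm_ne_zero_iff.mpr hGx)).smul hgfd
  -- tangency of the gradient of u
  set X := gradient u x with hX
  have hXν : ⟪X, ν x⟫ = 0 := hNeu x hx
  have hXGx : ⟪gradient f x, X⟫ = 0 := by
    have h1 : ⟪X, ‖gradient f x‖⁻¹ • gradient f x⟫ = 0 := by rw [← hν x]; exact hXν
    rw [real_inner_smul_right] at h1
    have h2 : ‖gradient f x‖⁻¹ ≠ 0 := by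
      simp [norm_ne_zero_iff.mpr hGx]
    rw [real_inner_comm]
    exact (mul_eq_zero.mp h1).resolve_left h2
  have htan : fderiv ℝ f x X = 0 := by rw [← inner_gradient_apply]; exact hXGx
  -- derivative data for gradient u
  obtain ⟨D, hD, hDinner⟩ := gradient_hasFDerivAt hu x
  have hgudiff : DifferentiableAt ℝ (gradient u) x := hD.differentiableAt
  -- key 1 : differentiating the Neumann condition tangentially
  have key1 : ⟪X, fderiv ℝ ν x X⟫ + ⟪fderiv ℝ (gradient u) x X, ν x⟫ = 0 := by
    have hg0 : ∀ (y : EuclideanSpace ℝ (Fin n)), f y = f x → ⟪gradient u y, ν y⟫ = 0 := by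
      intro y hy
      rw [hfrf x hx] at hy
      exact hNeu y (hfrf' y hy)
    have h1 : fderiv ℝ (fun w => ⟪gradient u w, ν w⟫) x X = 0 :=
      fderiv_eq_zero_of_vanish_level hstrict hsurj htan (hgudiff.inner ℝ hνdiff) hg0
    rw [fderiv_inner_apply ℝ hgudiff hνdiff X] at h1
    exact h1
  -- key 2 : convexity gives nonnegative second fundamental form along X
  have key2 : 0 ≤ ⟪fderiv ℝ ν x X, X⟫ := by
    obtain ⟨ψ, hψ0, hψd, hψf⟩ := exists_level_curve hstrict hsurj htan
    refine inner_fderiv_nonneg_of_eventually hψ0 hψd hνdiff ?_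
    filter_upwards [hψf] with t ht
    have hmem : ψ t ∈ frontier Ω := hfrf' _ (by rw [ht, hfrf x hx])
    exact hmono x hx (ψ t) hmem
  -- main identity
  have Tmain : fderiv ℝ (fun w => ‖gradient u w‖ ^ 2) x (ν x)
      = -2 * ⟪fderiv ℝ ν x X, X⟫ := by
    have hfun : (fun w : EuclideanSpace ℝ (Fin n) => ‖gradient u w‖ ^ 2)
        = fun w => ⟪gradient u w, gradient u w⟫ := by
      funext w
      rw [real_inner_self_eq_norm_sq]
    rw [hfun, fderiv_inner_apply ℝ hgudiff hgudiff (ν x)]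
    have hsymm : ⟪fderiv ℝ (gradient u) x (ν x), X⟫
        = ⟪fderiv ℝ (gradient u) x X, ν x⟫ :=
      inner_fderiv_gradient_symm hu x (ν x) X
    have hcomm : ⟪X, fderiv ℝ (gradient u) x (ν x)⟫
        = ⟪fderiv ℝ (gradient u) x (ν x), X⟫ := real_inner_comm _ _
    have hcomm2 : ⟪X, fderiv ℝ ν x X⟫ = ⟪fderiv ℝ ν x X, X⟫ := real_inner_comm _ _
    rw [← hX, hcomm, hsymm]
    rw [hcomm2] at key1
    linarith
  constructor
  · rw [Tmain]; linarith
  · intro hstrconv hT0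
    by_contra hX0
    have hpos : 0 < ⟪fderiv ℝ ν x X, X⟫ := hstrconv x hx X hXν hX0
    rw [Tmain] at hT0
    linarith
end

section
/- Let μ be a Radon measure on ℝⁿ satisfying μ(B_R(x)) ≤ D ω_{n−1} R^{n−1} for all x ∈ ℝⁿ and R > 0, where ω_{n−1} is the volume of the unit ball in ℝ^{n−1}. Define ρ_x^r(y) = (√(2π) r)^{−(n−1)} exp(−|y−x|²/(2r²)). Then for all r > 0 and x ∈ ℝⁿ, ∫_{ℝⁿ} ρ_x^r dμ ≤ D. -/
/-!
Both sides are integrals of the same radially decreasing Gaussian profile, against `μ` on `ℝⁿ`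
and against Lebesgue measure on `ℝⁿ⁻¹`. Its superlevel sets are balls of the same radius in both
spaces, and the density bound says exactly that `μ` gives such a ball at most `D` times the
Lebesgue measure of the corresponding ball in `ℝⁿ⁻¹`. By the layer-cake formula the
`μ`-integral is therefore at most `D` times the `(n-1)`-dimensional Gaussian integral, which is
`1` by the choice of normalisation.
-/

open MeasureTheory Set Metric Real
open scoped ENNReal

noncomputable def gaussianKernel {E : Type*} [NormedAddCommGroup E] (m : ℕ) (r : ℝ) (v : E) : ℝ :=
  ((√(2 * π) * r) ^ m)⁻¹ * exp (-‖v‖ ^ 2 / (2 * r ^ 2))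

section GaussianKernel

variable {E : Type*} [NormedAddCommGroup E] {r : ℝ}

lemma gaussianKernel_nonneg (m : ℕ) (v : E) (hr : 0 ≤ r) : 0 ≤ gaussianKernel m r v := by
  unfold gaussianKernel; positivity

@[fun_prop]
lemma continuous_gaussianKernel (m : ℕ) (r : ℝ) : Continuous (gaussianKernel (E := E) m r) := by
  unfold gaussianKernel; fun_prop

/-- For `t ≥ (√(2π) r)⁻ᵐ` the argument of `√` is nonpositive, so the radius is `0` and the ball
is empty. -/
lemma setOf_lt_gaussianKernel_sub {m : ℕ} (hr : 0 < r) {t : ℝ} (ht : 0 < t) (x : E) :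
    {y | t < gaussianKernel m r (y - x)} =
      ball x √(-(2 * r ^ 2) * log ((√(2 * π) * r) ^ m * t)) := by
  have hc : 0 < (√(2 * π) * r) ^ m := by positivity
  ext y
  rw [mem_ofPred_eq, mem_ball, dist_eq_norm, gaussianKernel, ← div_eq_inv_mul,
    lt_div_iff₀' hc, ← log_lt_iff_lt_exp (by positivity), lt_div_iff₀ (by positivity),
    lt_sqrt (norm_nonneg _)]
  constructor <;> intro h <;> linarith

end GaussianKernel

lemma lintegral_gaussianKernel {V : Type*} [NormedAddCommGroup V] [InnerProductSpace ℝ V]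
    [FiniteDimensional ℝ V] [MeasurableSpace V] [BorelSpace V] {r : ℝ} (hr : 0 < r) :
    ∫⁻ v : V, ENNReal.ofReal (gaussianKernel (Module.finrank ℝ V) r v) = 1 := by
  have hb : 0 < (2 * r ^ 2)⁻¹ := by positivity
  have hexp : ∫ v : V, exp (-(2 * r ^ 2)⁻¹ * ‖v‖ ^ 2) = (√(2 * π) * r) ^ Module.finrank ℝ V := by
    have hsqrt : √(2 * π) * r = √(π * (2 * r ^ 2)) := by
      rw [show π * (2 * r ^ 2) = 2 * π * r ^ 2 by ring,
        sqrt_mul' (2 * π) (sq_nonneg r), sqrt_sq hr.le]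
    rw [GaussianFourier.integral_rexp_neg_mul_sq_norm hb, div_inv_eq_mul, hsqrt,
      ← rpow_natCast _ (Module.finrank ℝ V), sqrt_eq_rpow, ← rpow_mul (by positivity)]
    ring_nf
  have hint : Integrable fun v : V => exp (-(2 * r ^ 2)⁻¹ * ‖v‖ ^ 2) :=
    .of_integral_ne_zero (by rw [hexp]; positivity)
  have hkernel : gaussianKernel (E := V) (Module.finrank ℝ V) r =
      fun v => ((√(2 * π) * r) ^ Module.finrank ℝ V)⁻¹ * exp (-(2 * r ^ 2)⁻¹ * ‖v‖ ^ 2) := by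
    ext v; rw [gaussianKernel, neg_div, div_eq_inv_mul, neg_mul]
  rw [hkernel, ← ofReal_integral_eq_lintegral_ofReal (hint.const_mul _)
    (.of_forall fun v => by positivity), integral_const_mul, hexp,
    inv_mul_cancel₀ (by positivity), ENNReal.ofReal_one]

lemma lintegral_ofReal_le_of_measure_lt_le {α β : Type*} [MeasurableSpace α] [MeasurableSpace β]
    {μ : Measure α} {ν : Measure β} {f : α → ℝ} {g : β → ℝ} {C : ℝ≥0∞}
    (hf_nn : 0 ≤ f) (hf : Measurable f) (hg_nn : 0 ≤ g) (hg : Measurable g)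
    (h : ∀ t, 0 < t → μ {a | t < f a} ≤ C * ν {b | t < g b}) :
    ∫⁻ a, ENNReal.ofReal (f a) ∂μ ≤ C * ∫⁻ b, ENNReal.ofReal (g b) ∂ν := by
  have hanti : Antitone fun t => ν {b | t < g b} :=
    fun s t hst => measure_mono fun b (hb : t < g b) => hst.trans_lt hb
  rw [lintegral_eq_lintegral_meas_lt μ (.of_forall hf_nn) hf.aemeasurable,
    lintegral_eq_lintegral_meas_lt ν (.of_forall hg_nn) hg.aemeasurable,
    ← lintegral_const_mul _ hanti.measurable]
  exact setLIntegral_mono' measurableSet_Ioi fun t ht => h t ht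

lemma lintegral_gaussianKernel_sub_le_of_measure_ball_le {E F : Type*}
    [NormedAddCommGroup E] [MeasurableSpace E] [BorelSpace E]
    [NormedAddCommGroup F] [MeasurableSpace F] [BorelSpace F]
    {μ : Measure E} {ν : Measure F} {C : ℝ≥0∞} (m : ℕ) {r : ℝ} (hr : 0 < r) (x : E)
    (h : ∀ R, 0 < R → μ (ball x R) ≤ C * ν (ball 0 R)) :
    ∫⁻ y, ENNReal.ofReal (gaussianKernel m r (y - x)) ∂μ ≤
      C * ∫⁻ v, ENNReal.ofReal (gaussianKernel m r v) ∂ν := by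
  refine lintegral_ofReal_le_of_measure_lt_le (fun y => gaussianKernel_nonneg m _ hr.le)
    (by fun_prop) (fun v => gaussianKernel_nonneg m v hr.le) (by fun_prop) fun t ht => ?_
  have hν := setOf_lt_gaussianKernel_sub (m := m) hr ht (0 : F)
  simp only [sub_zero] at hν
  rw [setOf_lt_gaussianKernel_sub hr ht, hν]
  rcases (sqrt_nonneg _).eq_or_lt with hR | hR
  · rw [← hR]; simp
  · exact h _ hR

theorem gaussian_kernel_integral_bound_general
    (n : ℕ) (μ : Measure (EuclideanSpace ℝ (Fin n)))
    (D : ℝ)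
    (hμ : ∀ (x : EuclideanSpace ℝ (Fin n)) (R : ℝ), 0 < R →
      μ (Metric.ball x R) ≤ ENNReal.ofReal
        (D * (volume (Metric.ball (0 : EuclideanSpace ℝ (Fin (n - 1))) 1)).toReal *
          R ^ (n - 1)))
    (x : EuclideanSpace ℝ (Fin n)) (r : ℝ) (hr : 0 < r) :
    ∫⁻ y, ENNReal.ofReal
        (((Real.sqrt (2 * Real.pi) * r) ^ (n - 1))⁻¹ *
          Real.exp (-‖y - x‖ ^ 2 / (2 * r ^ 2))) ∂μ ≤ ENNReal.ofReal D := by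
  have hball : ∀ R, 0 < R → μ (ball x R) ≤
      ENNReal.ofReal D * volume (ball (0 : EuclideanSpace ℝ (Fin (n - 1))) R) := fun R hR => by
    refine (hμ x R hR).trans_eq ?_
    rw [Measure.addHaar_ball_of_pos volume _ hR, finrank_euclideanSpace_fin,
      ENNReal.ofReal_mul' (by positivity), ENNReal.ofReal_mul' ENNReal.toReal_nonneg,
      ENNReal.ofReal_toReal measure_ball_lt_top.ne]
    ring
  have hnorm := lintegral_gaussianKernel (V := EuclideanSpace ℝ (Fin (n - 1))) hr
  rw [finrank_euclideanSpace_fin] at hnorm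
  exact (lintegral_gaussianKernel_sub_le_of_measure_ball_le (n - 1) hr x hball).trans_eq
    (by rw [hnorm, mul_one])

theorem gaussian_kernel_integral_bound
    (n : ℕ) (hn : 2 ≤ n) (μ : Measure (EuclideanSpace ℝ (Fin n)))
    [IsLocallyFiniteMeasure μ] (D : ℝ) (hD : 0 < D)
    (hμ : ∀ (x : EuclideanSpace ℝ (Fin n)) (R : ℝ), 0 < R →
      μ (Metric.ball x R) ≤ ENNReal.ofReal
        (D * (volume (Metric.ball (0 : EuclideanSpace ℝ (Fin (n - 1))) 1)).toReal *
          R ^ (n - 1)))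
    (x : EuclideanSpace ℝ (Fin n)) (r : ℝ) (hr : 0 < r) :
    ∫⁻ y, ENNReal.ofReal
        (((Real.sqrt (2 * Real.pi) * r) ^ (n - 1))⁻¹ *
          Real.exp (-‖y - x‖ ^ 2 / (2 * r ^ 2))) ∂μ ≤ ENNReal.ofReal D :=
  gaussian_kernel_integral_bound_general n μ D hμ x r hr
end

section
/- Let μ be a Radon measure on ℝⁿ with μ(B_R(x)) ≤ D ω_{n−1} R^{n−1} for all x, R. For every δ > 0 there exists γ₁ > 0 depending only on n and δ such that for all x, x₀ ∈ ℝⁿ and r > 0 with |x − x₀| < γ₁ r, one has ∫ ρ_{x₀}^r dμ ≤ (1+δ) ∫ ρ_x^r dμ + δ D, where ρ_x^r(y) = (√(2π) r)^{−(n−1)} exp(−|y−x|²/(2r²)). -/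
/-!
Since `‖y - x‖² - ‖y - x₀‖² ≤ 2 ‖y - x‖ ‖x - x₀‖`, the kernels satisfy
`ρ_{x₀}(y) ≤ exp (‖y - x‖ ‖x - x₀‖ / r²) ρ_x(y)`; hence if `‖x - x₀‖ ≤ γ r`, then on
`‖y - x‖ ≤ (L + 1) r` we get `ρ_{x₀} ≤ exp (γ (L + 1)) ρ_x ≤ (1 + δ) ρ_x` once `γ` is small.
The remaining points lie outside `B_{Lr}(x₀)`. Splitting that region into the shells
`B_{(k+1)r}(x₀) \ B_{kr}(x₀)`, `k ≥ L`, on which `ρ_{x₀} ≤ (√(2π) r)^{-(n-1)} e^{-k²/2}` and whose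
measure is at most `D ω_{n-1} ((k+1) r)^{n-1}`, bounds the mass of `ρ_{x₀}` there by
`D ω_{n-1} ∑_{k ≥ L} (k+1)^{n-1} e^{-k²/2}`, a tail of a convergent series, hence `≤ δ D`
for `L` large. Then `γ = min 1 (log (1 + δ) / (L + 1))` works.
-/

open MeasureTheory Metric

noncomputable def gaussKernel {E : Type*} [NormedAddCommGroup E] (m : ℕ) (r : ℝ) (x y : E) :
    ℝ :=
  ((Real.sqrt (2 * Real.pi) * r) ^ m)⁻¹ * Real.exp (-‖y - x‖ ^ 2 / (2 * r ^ 2))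

noncomputable def gaussShellWeight (m : ℕ) (k : ℝ) : ℝ :=
  (k + 1) ^ m * Real.exp (-k ^ 2 / 2)

lemma gaussShellWeight_nonneg (m : ℕ) {k : ℝ} (hk : 0 ≤ k) : 0 ≤ gaussShellWeight m k := by
  unfold gaussShellWeight; positivity

lemma summable_gaussShellWeight (m : ℕ) : Summable fun k : ℕ => gaussShellWeight m k := by
  have hexp_lt : ‖Real.exp (-1)‖ < 1 := by
    rw [Real.norm_of_nonneg (Real.exp_pos _).le, Real.exp_lt_one_iff]; norm_num
  have hgeom : Summable fun k : ℕ => ((k + 1 : ℕ) : ℝ) ^ m * Real.exp (-1) ^ (k + 1) :=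
    (summable_nat_add_iff (f := fun k : ℕ => (k : ℝ) ^ m * Real.exp (-1) ^ k) 1).mpr
      (summable_pow_mul_geometric_of_norm_lt_one m hexp_lt)
  refine (hgeom.mul_left (Real.exp (3 / 2))).of_nonneg_of_le
    (fun k => gaussShellWeight_nonneg m k.cast_nonneg) fun k => ?_
  have hexp : Real.exp (-(k : ℝ) ^ 2 / 2) ≤ Real.exp (3 / 2) * Real.exp (-1) ^ (k + 1) := by
    rw [← Real.exp_nat_mul, ← Real.exp_add, Real.exp_le_exp]
    push_cast
    nlinarith [sq_nonneg ((k : ℝ) - 1)]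
  calc gaussShellWeight m k
      ≤ ((k : ℝ) + 1) ^ m * (Real.exp (3 / 2) * Real.exp (-1) ^ (k + 1)) := by
        unfold gaussShellWeight; gcongr
    _ = _ := by push_cast; ring

lemma exists_tsum_gaussShellWeight_add_le (m : ℕ) {ε : ℝ} (hε : 0 < ε) :
    ∃ L : ℕ, ∑' k : ℕ, gaussShellWeight m ↑(k + L) ≤ ε :=
  ((tendsto_sum_nat_add fun k : ℕ => gaussShellWeight m k).eventually
    (ge_mem_nhds hε)).exists

lemma compl_ball_subset_iUnion_shell {X : Type*} [PseudoMetricSpace X] {z : X} {r : ℝ}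
    (hr : 0 < r) (L : ℕ) :
    (ball z (L * r))ᶜ ⊆ ⋃ k : ℕ, ball z ((↑(k + L) + 1) * r) \ ball z (↑(k + L) * r) := by
  intro y hy
  have hLy : (L : ℝ) ≤ dist y z / r := by
    rw [le_div_iff₀ hr]; simpa using hy
  obtain ⟨k, hk⟩ : ∃ k, ⌊dist y z / r⌋₊ = k + L :=
    ⟨_, (Nat.sub_add_cancel (Nat.le_floor hLy)).symm⟩
  refine Set.mem_iUnion.2 ⟨k, ?_, ?_⟩
  · rw [mem_ball, ← hk, ← div_lt_iff₀ hr]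
    exact Nat.lt_floor_add_one _
  · rw [mem_ball, not_lt, ← hk, ← le_div_iff₀ hr]
    exact Nat.floor_le (by positivity)

lemma sq_norm_sub_sq_norm_le {E : Type*} [SeminormedAddCommGroup E] (u v : E) :
    ‖u‖ ^ 2 - ‖v‖ ^ 2 ≤ 2 * ‖u‖ * ‖u - v‖ := by
  have htri : ‖u‖ ≤ ‖v‖ + ‖u - v‖ := norm_le_norm_add_norm_sub' u v
  rcases le_or_gt ‖u - v‖ ‖u‖ with h | h
  · nlinarith [mul_self_le_mul_self (sub_nonneg.2 h) (show ‖u‖ - ‖u - v‖ ≤ ‖v‖ by linarith),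
      sq_nonneg ‖u - v‖]
  · nlinarith [norm_nonneg u]

section GaussKernel

variable {E : Type*} [NormedAddCommGroup E] {m : ℕ} {r : ℝ}

lemma gaussKernel_nonneg (hr : 0 ≤ r) (x y : E) : 0 ≤ gaussKernel m r x y := by
  unfold gaussKernel; positivity

lemma continuous_gaussKernel (m : ℕ) (r : ℝ) (x : E) : Continuous (gaussKernel m r x) := by
  unfold gaussKernel; fun_prop

lemma gaussKernel_le_exp_mul (hr : 0 < r) (x x₀ y : E) :
    gaussKernel m r x₀ y ≤ Real.exp (‖y - x‖ * ‖x - x₀‖ / r ^ 2) * gaussKernel m r x y := by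
  unfold gaussKernel
  rw [mul_left_comm, ← Real.exp_add]
  gcongr
  have hsq := sq_norm_sub_sq_norm_le (y - x) (y - x₀)
  rw [sub_sub_sub_cancel_left, norm_sub_rev x₀ x] at hsq
  field_simp
  linarith

lemma gaussKernel_le_of_le_norm_sub (hr : 0 < r) {a : ℝ} (ha : 0 ≤ a) {x y : E}
    (hy : a * r ≤ ‖y - x‖) :
    gaussKernel m r x y ≤ ((Real.sqrt (2 * Real.pi) * r) ^ m)⁻¹ * Real.exp (-a ^ 2 / 2) := by
  unfold gaussKernel
  refine mul_le_mul_of_nonneg_left (Real.exp_le_exp.2 ?_) (by positivity)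
  rw [div_le_div_iff₀ (by positivity) (by norm_num)]
  nlinarith [pow_le_pow_left₀ (by positivity) hy 2]

variable [MeasurableSpace E] {μ : Measure E} {C : ℝ} {z : E}

lemma setLIntegral_gaussKernel_shell_le (hC : 0 ≤ C)
    (hμ : ∀ R, 0 < R → μ (ball z R) ≤ ENNReal.ofReal (C * R ^ m)) (hr : 0 < r) (j : ℕ) :
    ∫⁻ y in ball z ((j + 1) * r) \ ball z (j * r), ENNReal.ofReal (gaussKernel m r z y) ∂μ ≤
      ENNReal.ofReal (C * gaussShellWeight m j) := by
  set c := ((Real.sqrt (2 * Real.pi) * r) ^ m)⁻¹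
  have hsqrt : 1 ≤ Real.sqrt (2 * Real.pi) :=
    Real.one_le_sqrt.2 (by linarith [Real.pi_gt_three])
  have hprefactor : c * ((j + 1) * r) ^ m ≤ (j + 1) ^ m :=
    calc c * ((j + 1) * r) ^ m = (j + 1) ^ m / Real.sqrt (2 * Real.pi) ^ m := by
          simp only [c, mul_pow]; field_simp
      _ ≤ (j + 1) ^ m := div_le_self (by positivity) (one_le_pow₀ hsqrt)
  calc _ ≤ ∫⁻ _ in ball z ((j + 1) * r) \ ball z (j * r),
          ENNReal.ofReal (c * Real.exp (-(j : ℝ) ^ 2 / 2)) ∂μ :=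
        setLIntegral_mono measurable_const fun y hy => ENNReal.ofReal_le_ofReal
          (gaussKernel_le_of_le_norm_sub hr j.cast_nonneg (by simpa [dist_eq_norm] using hy.2))
    _ = ENNReal.ofReal (c * Real.exp (-(j : ℝ) ^ 2 / 2)) *
          μ (ball z ((j + 1) * r) \ ball z (j * r)) := setLIntegral_const _ _
    _ ≤ ENNReal.ofReal (c * Real.exp (-(j : ℝ) ^ 2 / 2)) *
          ENNReal.ofReal (C * ((j + 1) * r) ^ m) := by
        gcongr
        exact (measure_mono Set.sdiff_subset).trans (hμ _ (by positivity))
    _ = ENNReal.ofReal (C * (c * ((j + 1) * r) ^ m) * Real.exp (-(j : ℝ) ^ 2 / 2)) := by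
        rw [← ENNReal.ofReal_mul (by positivity)]; ring_nf
    _ ≤ _ := by
        refine ENNReal.ofReal_le_ofReal ?_
        calc _ ≤ C * (j + 1) ^ m * Real.exp (-(j : ℝ) ^ 2 / 2) := by gcongr
          _ = _ := by rw [gaussShellWeight]; ring

lemma setLIntegral_gaussKernel_compl_ball_le (hC : 0 ≤ C)
    (hμ : ∀ R, 0 < R → μ (ball z R) ≤ ENNReal.ofReal (C * R ^ m)) (hr : 0 < r) (L : ℕ) :
    ∫⁻ y in (ball z (L * r))ᶜ, ENNReal.ofReal (gaussKernel m r z y) ∂μ ≤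
      ENNReal.ofReal (C * ∑' k : ℕ, gaussShellWeight m ↑(k + L)) := by
  have hsum : Summable fun k : ℕ => C * gaussShellWeight m ↑(k + L) :=
    ((summable_nat_add_iff L).2 (summable_gaussShellWeight m)).mul_left C
  calc _ ≤ ∫⁻ y in ⋃ k : ℕ, ball z ((↑(k + L) + 1) * r) \ ball z (↑(k + L) * r),
          ENNReal.ofReal (gaussKernel m r z y) ∂μ :=
        lintegral_mono_set (compl_ball_subset_iUnion_shell hr L)
    _ ≤ ∑' k : ℕ, ∫⁻ y in ball z ((↑(k + L) + 1) * r) \ ball z (↑(k + L) * r),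
          ENNReal.ofReal (gaussKernel m r z y) ∂μ := lintegral_iUnion_le _ _
    _ ≤ ∑' k : ℕ, ENNReal.ofReal (C * gaussShellWeight m ↑(k + L)) :=
        ENNReal.tsum_le_tsum fun k => setLIntegral_gaussKernel_shell_le hC hμ hr (k + L)
    _ = _ := by
        rw [← tsum_mul_left, ENNReal.ofReal_tsum_of_nonneg
          (fun k => mul_nonneg hC (gaussShellWeight_nonneg m (Nat.cast_nonneg _))) hsum]

lemma lintegral_gaussKernel_le_of_norm_sub_le [OpensMeasurableSpace E] (μ : Measure E) (m : ℕ)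
    {γ : ℝ} (hr : 0 < r) (hγ : γ ≤ 1) (L : ℕ) {x x₀ : E} (hx : ‖x - x₀‖ ≤ γ * r) :
    ∫⁻ y, ENNReal.ofReal (gaussKernel m r x₀ y) ∂μ ≤
      ENNReal.ofReal (Real.exp (γ * (L + 1))) * ∫⁻ y, ENNReal.ofReal (gaussKernel m r x y) ∂μ +
        ∫⁻ y in (ball x₀ (L * r))ᶜ, ENNReal.ofReal (gaussKernel m r x₀ y) ∂μ := by
  have hpt : ∀ y, ENNReal.ofReal (gaussKernel m r x₀ y) ≤
      ENNReal.ofReal (Real.exp (γ * (L + 1))) * ENNReal.ofReal (gaussKernel m r x y) +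
        (ball x₀ (L * r))ᶜ.indicator (fun y => ENNReal.ofReal (gaussKernel m r x₀ y)) y := by
    intro y
    rcases le_or_gt ‖y - x‖ ((L + 1) * r) with hnear | hfar
    · refine le_add_right ?_
      rw [← ENNReal.ofReal_mul (Real.exp_pos _).le]
      refine ENNReal.ofReal_le_ofReal ((gaussKernel_le_exp_mul hr x x₀ y).trans ?_)
      refine mul_le_mul_of_nonneg_right (Real.exp_le_exp.2 ?_) (gaussKernel_nonneg hr.le x y)
      rw [div_le_iff₀ (by positivity)]
      calc ‖y - x‖ * ‖x - x₀‖ ≤ ((L + 1) * r) * (γ * r) :=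
            mul_le_mul hnear hx (norm_nonneg _) (by positivity)
        _ = _ := by ring
    · have hy : y ∈ (ball x₀ (L * r))ᶜ := by
        have htri := norm_sub_le_norm_sub_add_norm_sub y x₀ x
        rw [norm_sub_rev x₀ x] at htri
        rw [Set.mem_compl_iff, mem_ball, not_lt, dist_eq_norm]
        nlinarith
      rw [Set.indicator_of_mem hy]
      exact le_add_self
  have hmeas := (continuous_gaussKernel m r x).measurable.ennreal_ofReal
  calc _ ≤ _ := lintegral_mono hpt
    _ = _ := by
      rw [lintegral_add_left (hmeas.const_mul _), lintegral_const_mul _ hmeas,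
        lintegral_indicator measurableSet_ball.compl]

end GaussKernel

theorem gaussian_kernel_center_comparison_general
    (n : ℕ) (δ : ℝ) (hδ : 0 < δ) :
    ∃ γ₁ > (0 : ℝ),
      ∀ (μ : Measure (EuclideanSpace ℝ (Fin n))), IsLocallyFiniteMeasure μ →
        ∀ (D : ℝ), 0 < D →
        (∀ (x : EuclideanSpace ℝ (Fin n)) (R : ℝ), 0 < R →
          μ (Metric.ball x R) ≤ ENNReal.ofReal
            (D * (volume (Metric.ball (0 : EuclideanSpace ℝ (Fin (n - 1))) 1)).toReal *
              R ^ (n - 1))) →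
        ∀ (x x₀ : EuclideanSpace ℝ (Fin n)) (r : ℝ), 0 < r → ‖x - x₀‖ < γ₁ * r →
          ∫⁻ y, ENNReal.ofReal
              (((Real.sqrt (2 * Real.pi) * r) ^ (n - 1))⁻¹ *
                Real.exp (-‖y - x₀‖ ^ 2 / (2 * r ^ 2))) ∂μ ≤
            ENNReal.ofReal (1 + δ) *
              ∫⁻ y, ENNReal.ofReal
                (((Real.sqrt (2 * Real.pi) * r) ^ (n - 1))⁻¹ *
                  Real.exp (-‖y - x‖ ^ 2 / (2 * r ^ 2))) ∂μ +
              ENNReal.ofReal (δ * D) := by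
  set ω := (volume (ball (0 : EuclideanSpace ℝ (Fin (n - 1))) 1)).toReal
  have hω : 0 < ω :=
    ENNReal.toReal_pos (measure_ball_pos _ _ one_pos).ne' measure_ball_lt_top.ne
  obtain ⟨L, hL⟩ := exists_tsum_gaussShellWeight_add_le (n - 1) (div_pos hδ hω)
  set γ := min 1 (Real.log (1 + δ) / (L + 1))
  have hγ : Real.exp (γ * (L + 1)) ≤ 1 + δ := by
    rw [← Real.le_log_iff_exp_le (by linarith), ← le_div_iff₀ (by positivity)]
    exact min_le_right _ _
  refine ⟨γ, lt_min one_pos (div_pos (Real.log_pos (by linarith)) (by positivity)),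
    fun μ _ D hD hμ x x₀ r hr hx => ?_⟩
  calc _ ≤ _ := lintegral_gaussKernel_le_of_norm_sub_le μ (n - 1) hr (min_le_left _ _) L hx.le
    _ ≤ _ := by
      gcongr ?_ * _ + ?_
      · exact ENNReal.ofReal_le_ofReal hγ
      refine (setLIntegral_gaussKernel_compl_ball_le (by positivity) (fun R hR => hμ x₀ R hR)
        hr L).trans (ENNReal.ofReal_le_ofReal ?_)
      calc D * ω * ∑' k : ℕ, gaussShellWeight (n - 1) ↑(k + L) ≤ D * ω * (δ / ω) := by gcongr
        _ = δ * D := by field_simp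

theorem gaussian_kernel_center_comparison
    (n : ℕ) (hn : 2 ≤ n) (δ : ℝ) (hδ : 0 < δ) :
    ∃ γ₁ > (0 : ℝ),
      ∀ (μ : Measure (EuclideanSpace ℝ (Fin n))), IsLocallyFiniteMeasure μ →
        ∀ (D : ℝ), 0 < D →
        (∀ (x : EuclideanSpace ℝ (Fin n)) (R : ℝ), 0 < R →
          μ (Metric.ball x R) ≤ ENNReal.ofReal
            (D * (volume (Metric.ball (0 : EuclideanSpace ℝ (Fin (n - 1))) 1)).toReal *
              R ^ (n - 1))) →
        ∀ (x x₀ : EuclideanSpace ℝ (Fin n)) (r : ℝ), 0 < r → ‖x - x₀‖ < γ₁ * r →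
          ∫⁻ y, ENNReal.ofReal
              (((Real.sqrt (2 * Real.pi) * r) ^ (n - 1))⁻¹ *
                Real.exp (-‖y - x₀‖ ^ 2 / (2 * r ^ 2))) ∂μ ≤
            ENNReal.ofReal (1 + δ) *
              ∫⁻ y, ENNReal.ofReal
                (((Real.sqrt (2 * Real.pi) * r) ^ (n - 1))⁻¹ *
                  Real.exp (-‖y - x‖ ^ 2 / (2 * r ^ 2))) ∂μ +
              ENNReal.ofReal (δ * D) :=
  gaussian_kernel_center_comparison_general n δ hδ
end

section
/- Let μ be a Radon measure on ℝⁿ with μ(B_R(x)) ≤ D ω_{n−1} R^{n−1} for all x, R. For every δ > 0 there exists γ₂ > 0 depending only on n and δ such that for all x ∈ ℝⁿ and r, R > 0 with 1 ≤ R/r ≤ 1 + γ₂, one has ∫ ρ_x^R dμ ≤ (1+δ) ∫ ρ_x^r dμ + δ D, where ρ_x^r(y) = (√(2π) r)^{−(n−1)} exp(−|y−x|²/(2r²)). -/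
open MeasureTheory
open Metric

lemma gauss_exp_aux (m k : ℕ) :
    ((k : ℝ) + 1) ^ m * Real.exp (-(k : ℝ) ^ 2 / 2) ≤
      Real.exp (1 / 2) * (((k + 1 : ℕ) : ℝ) ^ m * Real.exp (-(1 : ℝ) / 2) ^ (k + 1)) := by
  have hk : Real.exp (-(k : ℝ) ^ 2 / 2) ≤
      Real.exp (1 / 2) * Real.exp (-(1 : ℝ) / 2) ^ (k + 1) := by
    rw [← Real.exp_nat_mul, ← Real.exp_add]
    apply Real.exp_le_exp.2
    have h3 : (k : ℝ) ≤ (k : ℝ) ^ 2 := by exact_mod_cast Nat.le_self_pow (by norm_num) k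
    push_cast
    linarith
  have h4 : (0 : ℝ) ≤ ((k : ℝ) + 1) ^ m := by positivity
  calc ((k : ℝ) + 1) ^ m * Real.exp (-(k : ℝ) ^ 2 / 2)
      ≤ ((k : ℝ) + 1) ^ m * (Real.exp (1 / 2) * Real.exp (-(1 : ℝ) / 2) ^ (k + 1)) :=
        mul_le_mul_of_nonneg_left hk h4
    _ = Real.exp (1 / 2) * (((k + 1 : ℕ) : ℝ) ^ m * Real.exp (-(1 : ℝ) / 2) ^ (k + 1)) := by
        push_cast; ring

lemma gauss_sum_aux (m : ℕ) :
    Summable (fun k : ℕ => ((k : ℝ) + 1) ^ m * Real.exp (-(k : ℝ) ^ 2 / 2)) := by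
  have hr : ‖Real.exp (-(1 : ℝ) / 2)‖ < 1 := by
    rw [Real.norm_eq_abs, abs_of_pos (Real.exp_pos _)]
    exact Real.exp_lt_one_iff.mpr (by norm_num)
  have h1 : Summable (fun k : ℕ => (k : ℝ) ^ m * Real.exp (-(1 : ℝ) / 2) ^ k) :=
    summable_pow_mul_geometric_of_norm_lt_one m hr
  have h2 : Summable (fun k : ℕ => ((k + 1 : ℕ) : ℝ) ^ m * Real.exp (-(1 : ℝ) / 2) ^ (k + 1)) :=
    (summable_nat_add_iff 1).2 h1
  exact Summable.of_nonneg_of_le (fun k => by positivity) (fun k => gauss_exp_aux m k)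
    (h2.mul_left (Real.exp (1 / 2)))

lemma gauss_integral_bound (n m : ℕ) :
    ∃ C : ℝ, 0 < C ∧
    ∀ (μ : Measure (EuclideanSpace ℝ (Fin n))) (D' : ℝ), 0 ≤ D' →
    (∀ (x : EuclideanSpace ℝ (Fin n)) (R : ℝ), 0 < R →
        μ (Metric.ball x R) ≤ ENNReal.ofReal (D' * R ^ m)) →
    ∀ (x : EuclideanSpace ℝ (Fin n)) (σ : ℝ), 0 < σ →
    ∫⁻ y, ENNReal.ofReal (Real.exp (-‖y - x‖ ^ 2 / (2 * σ ^ 2))) ∂μ ≤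
      ENNReal.ofReal (C * D' * σ ^ m) := by
  classical
  have hsum := gauss_sum_aux m
  set S : ℝ := ∑' k : ℕ, ((k : ℝ) + 1) ^ m * Real.exp (-(k : ℝ) ^ 2 / 2) with hS
  have hSpos : 0 < S := by
    refine Summable.tsum_pos hsum (fun k => by positivity) 0 (by positivity)
  refine ⟨S, hSpos, fun μ D' hD' hμ x σ hσ => ?_⟩
  -- pointwise bound by a sum of indicators
  have hpt : ∀ y, ENNReal.ofReal (Real.exp (-‖y - x‖ ^ 2 / (2 * σ ^ 2))) ≤
      ∑' k : ℕ, (Metric.ball x (((k : ℝ) + 1) * σ)).indicator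
        (fun _ => ENNReal.ofReal (Real.exp (-(k : ℝ) ^ 2 / 2))) y := by
    intro y
    set s := ‖y - x‖ with hs
    have hs0 : 0 ≤ s := norm_nonneg _
    set k := ⌊s / σ⌋₊ with hk
    refine le_trans ?_ (ENNReal.le_tsum k)
    rw [Set.indicator_of_mem]
    · apply ENNReal.ofReal_le_ofReal
      apply Real.exp_le_exp.2
      have h1 : (k : ℝ) ≤ s / σ := Nat.floor_le (by positivity)
      have h2 : (k : ℝ) * σ ≤ s := by
        rw [← le_div_iff₀ hσ]; exact h1
      have h3 : (k : ℝ) ^ 2 * σ ^ 2 ≤ s ^ 2 := by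
        have := pow_le_pow_left₀ (by positivity : (0:ℝ) ≤ (k:ℝ) * σ) h2 2
        rwa [mul_pow] at this
      rw [div_le_div_iff₀ (by positivity) (by norm_num : (0:ℝ) < 2)]
      nlinarith
    · have h1 : s / σ < (k : ℝ) + 1 := Nat.lt_floor_add_one _
      have : s < ((k : ℝ) + 1) * σ := by
        rw [← div_lt_iff₀ hσ] at *; exact h1
      simpa [Metric.mem_ball, dist_eq_norm, hs] using this
  calc ∫⁻ y, ENNReal.ofReal (Real.exp (-‖y - x‖ ^ 2 / (2 * σ ^ 2))) ∂μ
      ≤ ∫⁻ y, ∑' k : ℕ, (Metric.ball x (((k : ℝ) + 1) * σ)).indicator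
          (fun _ => ENNReal.ofReal (Real.exp (-(k : ℝ) ^ 2 / 2))) y ∂μ :=
        lintegral_mono hpt
    _ = ∑' k : ℕ, ∫⁻ y, (Metric.ball x (((k : ℝ) + 1) * σ)).indicator
          (fun _ => ENNReal.ofReal (Real.exp (-(k : ℝ) ^ 2 / 2))) y ∂μ :=
        lintegral_tsum (fun k => (measurable_const.indicator measurableSet_ball).aemeasurable)
    _ = ∑' k : ℕ, ENNReal.ofReal (Real.exp (-(k : ℝ) ^ 2 / 2)) *
          μ (Metric.ball x (((k : ℝ) + 1) * σ)) := by
        refine tsum_congr fun k => ?_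
        rw [lintegral_indicator_const measurableSet_ball]
    _ ≤ ∑' k : ℕ, ENNReal.ofReal (Real.exp (-(k : ℝ) ^ 2 / 2)) *
          ENNReal.ofReal (D' * (((k : ℝ) + 1) * σ) ^ m) := by
        refine ENNReal.tsum_le_tsum fun k => ?_
        exact mul_le_mul_right (hμ x _ (by positivity)) _
    _ = ∑' k : ℕ, ENNReal.ofReal (((k : ℝ) + 1) ^ m * Real.exp (-(k : ℝ) ^ 2 / 2) * (D' * σ ^ m)) := by
        refine tsum_congr fun k => ?_
        rw [← ENNReal.ofReal_mul (Real.exp_pos _).le]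
        congr 1
        rw [mul_pow]
        ring
    _ = ENNReal.ofReal (∑' k : ℕ, ((k : ℝ) + 1) ^ m * Real.exp (-(k : ℝ) ^ 2 / 2) * (D' * σ ^ m)) := by
        rw [ENNReal.ofReal_tsum_of_nonneg (fun k => by positivity) (hsum.mul_right _)]
    _ = ENNReal.ofReal (S * D' * σ ^ m) := by
        rw [tsum_mul_right, ← hS, mul_assoc]

/- STATEMENT 8 -/
set_option maxHeartbeats 1000000 in
theorem gaussian_kernel_radius_comparison
    (n : ℕ) (hn : 2 ≤ n) (δ : ℝ) (hδ : 0 < δ) :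
    ∃ γ₂ > (0 : ℝ),
      ∀ (μ : Measure (EuclideanSpace ℝ (Fin n))), IsLocallyFiniteMeasure μ →
        ∀ (D : ℝ), 0 < D →
        (∀ (x : EuclideanSpace ℝ (Fin n)) (R : ℝ), 0 < R →
          μ (Metric.ball x R) ≤ ENNReal.ofReal
            (D * (volume (Metric.ball (0 : EuclideanSpace ℝ (Fin (n - 1))) 1)).toReal *
              R ^ (n - 1))) →
        ∀ (x : EuclideanSpace ℝ (Fin n)) (r R : ℝ), 0 < r → 0 < R →
          1 ≤ R / r → R / r ≤ 1 + γ₂ →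
          ∫⁻ y, ENNReal.ofReal
              (((Real.sqrt (2 * Real.pi) * R) ^ (n - 1))⁻¹ *
                Real.exp (-‖y - x‖ ^ 2 / (2 * R ^ 2))) ∂μ ≤
            ENNReal.ofReal (1 + δ) *
              ∫⁻ y, ENNReal.ofReal
                (((Real.sqrt (2 * Real.pi) * r) ^ (n - 1))⁻¹ *
                  Real.exp (-‖y - x‖ ^ 2 / (2 * r ^ 2))) ∂μ +
              ENNReal.ofReal (δ * D) := by
  classical
  obtain ⟨C, hC, hA⟩ := gauss_integral_bound n (n - 1)
  set A : ℝ := Real.sqrt (2 * Real.pi) with hAdef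
  have hA0 : 0 < A := Real.sqrt_pos.2 (by positivity)
  set ω : ℝ := (volume (Metric.ball (0 : EuclideanSpace ℝ (Fin (n - 1))) 1)).toReal with hωdef
  have hωpos : 0 < ω := by
    refine ENNReal.toReal_pos ?_ ?_
    · exact (measure_ball_pos volume _ one_pos).ne'
    · exact measure_ball_lt_top.ne
  set C' : ℝ := C * ω * (2 * Real.sqrt 2 / A) ^ (n - 1) with hC'def
  have hC'pos : 0 < C' := by positivity
  have hmax : (0 : ℝ) < max 1 (Real.log (C' / δ)) := lt_of_lt_of_le one_pos (le_max_left _ _)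
  set M : ℝ := Real.sqrt (16 * max 1 (Real.log (C' / δ))) with hMdef
  have hM2 : M ^ 2 = 16 * max 1 (Real.log (C' / δ)) := Real.sq_sqrt (by positivity)
  have hMpos : 0 < M := Real.sqrt_pos.2 (by positivity)
  have hM : C' * Real.exp (-M ^ 2 / 16) ≤ δ := by
    have h1 : -M ^ 2 / 16 ≤ -(Real.log (C' / δ)) := by
      rw [hM2]
      have := le_max_right 1 (Real.log (C' / δ))
      linarith
    calc C' * Real.exp (-M ^ 2 / 16) ≤ C' * Real.exp (-(Real.log (C' / δ))) :=
          mul_le_mul_of_nonneg_left (Real.exp_le_exp.2 h1) hC'pos.le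
      _ = C' * (δ / C') := by
          rw [Real.exp_neg, Real.exp_log (by positivity), inv_div]
      _ = δ := by field_simp
  have hlog : 0 < Real.log (1 + δ) := Real.log_pos (by linarith)
  refine ⟨min 1 (2 * Real.log (1 + δ) / (3 * M ^ 2)), lt_min one_pos (by positivity), ?_⟩
  set γ₂ : ℝ := min 1 (2 * Real.log (1 + δ) / (3 * M ^ 2)) with hγdef
  intro μ _ D hD hμ x r R hr hR hRr1 hRr2
  have hγ1 : γ₂ ≤ 1 := min_le_left _ _
  have hγ2 : γ₂ * (3 * M ^ 2) ≤ 2 * Real.log (1 + δ) := by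
    have h := min_le_right 1 (2 * Real.log (1 + δ) / (3 * M ^ 2))
    rw [← hγdef] at h
    rw [← le_div_iff₀ (by positivity)]
    exact h
  have hγpos : 0 < γ₂ := lt_min one_pos (by positivity)
  have hrR : r ≤ R := (one_le_div hr).1 hRr1
  have hRub : R ≤ (1 + γ₂) * r := by
    rw [div_le_iff₀ hr] at hRr2; exact hRr2
  have hR2r : R ≤ 2 * r := by nlinarith [hRub, hγ1, hr.le, mul_le_mul_of_nonneg_right hγ1 hr.le]
  set K : ℝ := ((A * r) ^ (n - 1))⁻¹ * Real.exp (-M ^ 2 / 16) with hKdef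
  have hK0 : 0 ≤ K := by positivity
  have hpre : ((A * R) ^ (n - 1))⁻¹ ≤ ((A * r) ^ (n - 1))⁻¹ := by
    apply inv_anti₀ (by positivity)
    exact pow_le_pow_left₀ (by positivity) (mul_le_mul_of_nonneg_left hrR hA0.le) _
  -- pointwise bound
  have hpt : ∀ y : EuclideanSpace ℝ (Fin n),
      ENNReal.ofReal (((A * R) ^ (n - 1))⁻¹ * Real.exp (-‖y - x‖ ^ 2 / (2 * R ^ 2))) ≤
        ENNReal.ofReal ((1 + δ) *
            (((A * r) ^ (n - 1))⁻¹ * Real.exp (-‖y - x‖ ^ 2 / (2 * r ^ 2)))) +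
          ENNReal.ofReal (K * Real.exp (-‖y - x‖ ^ 2 / (2 * (Real.sqrt 2 * R) ^ 2))) := by
    intro y
    set s : ℝ := ‖y - x‖ with hsdef
    have hs0 : 0 ≤ s := norm_nonneg _
    rcases le_or_gt s (M * r) with hcase | hcase
    · refine le_add_right (ENNReal.ofReal_le_ofReal ?_)
      have hdle : s ^ 2 / (2 * r ^ 2) - s ^ 2 / (2 * R ^ 2) ≤ Real.log (1 + δ) := by
        have e1 : s ^ 2 / (2 * r ^ 2) - s ^ 2 / (2 * R ^ 2) =
            s ^ 2 * (R ^ 2 - r ^ 2) / (2 * r ^ 2 * R ^ 2) := by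
          field_simp
        rw [e1, div_le_iff₀ (by positivity)]
        have hs2 : s ^ 2 ≤ M ^ 2 * r ^ 2 := by
          have h := pow_le_pow_left₀ hs0 hcase 2
          rw [mul_pow] at h
          exact h
        have hR2 : R ^ 2 - r ^ 2 ≤ 3 * γ₂ * r ^ 2 := by
          have h := mul_le_mul hRub hRub (by linarith) (by positivity)
          nlinarith [h, pow_pos hr 2, hγpos, hγ1, mul_le_mul_of_nonneg_right hγ1 (sq_nonneg r),
            mul_nonneg (mul_nonneg hγpos.le hγpos.le) (sq_nonneg r)]
        have hb1 : s ^ 2 * (R ^ 2 - r ^ 2) ≤ M ^ 2 * r ^ 2 * (3 * γ₂ * r ^ 2) := by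
          have hnum : 0 ≤ R ^ 2 - r ^ 2 := by
            have h := pow_le_pow_left₀ hr.le hrR 2
            linarith
          exact mul_le_mul hs2 hR2 hnum (by positivity)
        have h5 : M ^ 2 * r ^ 2 * (3 * γ₂ * r ^ 2) ≤ 2 * Real.log (1 + δ) * (r ^ 2 * r ^ 2) := by
          nlinarith [hγ2, mul_pos (pow_pos hr 2) (pow_pos hr 2)]
        have h6 : 2 * Real.log (1 + δ) * (r ^ 2 * r ^ 2) ≤
            Real.log (1 + δ) * (2 * r ^ 2 * R ^ 2) := by
          have h61 : r ^ 2 ≤ R ^ 2 := pow_le_pow_left₀ hr.le hrR 2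
          nlinarith [mul_nonneg (mul_nonneg hlog.le (pow_pos hr 2).le) (sub_nonneg.2 h61)]
        linarith
      have hd : Real.exp (-s ^ 2 / (2 * R ^ 2)) ≤ (1 + δ) * Real.exp (-s ^ 2 / (2 * r ^ 2)) := by
        have e2 : -s ^ 2 / (2 * R ^ 2) =
            -s ^ 2 / (2 * r ^ 2) + (s ^ 2 / (2 * r ^ 2) - s ^ 2 / (2 * R ^ 2)) := by ring
        rw [e2, Real.exp_add]
        have h6 : Real.exp (s ^ 2 / (2 * r ^ 2) - s ^ 2 / (2 * R ^ 2)) ≤ 1 + δ :=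
          le_trans (Real.exp_le_exp.2 hdle) (le_of_eq (Real.exp_log (by linarith)))
        calc Real.exp (-s ^ 2 / (2 * r ^ 2)) * Real.exp (s ^ 2 / (2 * r ^ 2) - s ^ 2 / (2 * R ^ 2))
            ≤ Real.exp (-s ^ 2 / (2 * r ^ 2)) * (1 + δ) :=
              mul_le_mul_of_nonneg_left h6 (Real.exp_pos _).le
          _ = (1 + δ) * Real.exp (-s ^ 2 / (2 * r ^ 2)) := mul_comm _ _
      calc ((A * R) ^ (n - 1))⁻¹ * Real.exp (-s ^ 2 / (2 * R ^ 2))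
          ≤ ((A * r) ^ (n - 1))⁻¹ * ((1 + δ) * Real.exp (-s ^ 2 / (2 * r ^ 2))) :=
            mul_le_mul hpre hd (Real.exp_pos _).le (by positivity)
        _ = (1 + δ) * (((A * r) ^ (n - 1))⁻¹ * Real.exp (-s ^ 2 / (2 * r ^ 2))) := by ring
    · refine le_add_left (ENNReal.ofReal_le_ofReal ?_)
      have hsq2 : (Real.sqrt 2 * R) ^ 2 = 2 * R ^ 2 := by
        rw [mul_pow, Real.sq_sqrt (by norm_num : (0:ℝ) ≤ 2)]
      rw [hsq2]
      have hsplit : Real.exp (-s ^ 2 / (2 * R ^ 2)) =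
          Real.exp (-s ^ 2 / (2 * (2 * R ^ 2))) * Real.exp (-s ^ 2 / (2 * (2 * R ^ 2))) := by
        rw [← Real.exp_add]
        congr 1
        field_simp
        ring
      have hexp1 : Real.exp (-s ^ 2 / (2 * (2 * R ^ 2))) ≤ Real.exp (-M ^ 2 / 16) := by
        apply Real.exp_le_exp.2
        rw [div_le_div_iff₀ (by positivity) (by norm_num : (0:ℝ) < 16)]
        have h7 : M ^ 2 * r ^ 2 ≤ s ^ 2 := by
          have h := mul_le_mul hcase.le hcase.le (by positivity) hs0
          nlinarith [h]
        have h8 : R ^ 2 ≤ 4 * r ^ 2 := by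
          have h := pow_le_pow_left₀ hR.le hR2r 2
          nlinarith [h]
        nlinarith [mul_le_mul_of_nonneg_left h8 (sq_nonneg M), h7]
      calc ((A * R) ^ (n - 1))⁻¹ * Real.exp (-s ^ 2 / (2 * R ^ 2))
          = ((A * R) ^ (n - 1))⁻¹ *
              (Real.exp (-s ^ 2 / (2 * (2 * R ^ 2))) * Real.exp (-s ^ 2 / (2 * (2 * R ^ 2)))) := by
            rw [← hsplit]
        _ ≤ ((A * r) ^ (n - 1))⁻¹ *
              (Real.exp (-M ^ 2 / 16) * Real.exp (-s ^ 2 / (2 * (2 * R ^ 2)))) := by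
            refine mul_le_mul hpre ?_ (by positivity) (by positivity)
            exact mul_le_mul_of_nonneg_right hexp1 (Real.exp_pos _).le
        _ = K * Real.exp (-s ^ 2 / (2 * (2 * R ^ 2))) := by rw [hKdef]; ring
  -- measurability
  have meas_exp : ∀ c : ℝ, Measurable fun y : EuclideanSpace ℝ (Fin n) =>
      Real.exp (-‖y - x‖ ^ 2 / c) := by
    intro c
    fun_prop
  have meas_f : Measurable fun y : EuclideanSpace ℝ (Fin n) =>
      ENNReal.ofReal ((1 + δ) *
        (((A * r) ^ (n - 1))⁻¹ * Real.exp (-‖y - x‖ ^ 2 / (2 * r ^ 2)))) := by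
    fun_prop
  have meas_r : Measurable fun y : EuclideanSpace ℝ (Fin n) =>
      ENNReal.ofReal (((A * r) ^ (n - 1))⁻¹ * Real.exp (-‖y - x‖ ^ 2 / (2 * r ^ 2))) := by
    fun_prop
  have meas_g : Measurable fun y : EuclideanSpace ℝ (Fin n) =>
      ENNReal.ofReal (Real.exp (-‖y - x‖ ^ 2 / (2 * (Real.sqrt 2 * R) ^ 2))) := by
    fun_prop
  -- tail estimate
  have happ := hA μ (D * ω) (by positivity) hμ x (Real.sqrt 2 * R)
    (by positivity)
  have hfinal : K * (C * (D * ω) * (Real.sqrt 2 * R) ^ (n - 1)) ≤ δ * D := by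
    have h1 : ((A * r) ^ (n - 1))⁻¹ * (Real.sqrt 2 * R) ^ (n - 1) =
        (Real.sqrt 2 * R / (A * r)) ^ (n - 1) := by
      rw [inv_mul_eq_div, ← div_pow]
    have h2 : Real.sqrt 2 * R / (A * r) ≤ 2 * Real.sqrt 2 / A := by
      rw [div_le_div_iff₀ (by positivity) hA0]
      have h := mul_le_mul_of_nonneg_left hR2r (mul_nonneg (Real.sqrt_nonneg 2) hA0.le)
      nlinarith [h]
    have h3 : (Real.sqrt 2 * R / (A * r)) ^ (n - 1) ≤ (2 * Real.sqrt 2 / A) ^ (n - 1) :=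
      pow_le_pow_left₀ (by positivity) h2 _
    calc K * (C * (D * ω) * (Real.sqrt 2 * R) ^ (n - 1))
        = C * ω * Real.exp (-M ^ 2 / 16) *
            (((A * r) ^ (n - 1))⁻¹ * (Real.sqrt 2 * R) ^ (n - 1)) * D := by
          rw [hKdef]; ring
      _ = C * ω * Real.exp (-M ^ 2 / 16) * (Real.sqrt 2 * R / (A * r)) ^ (n - 1) * D := by
          rw [h1]
      _ ≤ C * ω * Real.exp (-M ^ 2 / 16) * (2 * Real.sqrt 2 / A) ^ (n - 1) * D := by
          refine mul_le_mul_of_nonneg_right (mul_le_mul_of_nonneg_left h3 (by positivity)) hD.le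
      _ = C' * Real.exp (-M ^ 2 / 16) * D := by rw [hC'def]; ring
      _ ≤ δ * D := mul_le_mul_of_nonneg_right hM hD.le
  have htail : ∫⁻ y, ENNReal.ofReal
      (K * Real.exp (-‖y - x‖ ^ 2 / (2 * (Real.sqrt 2 * R) ^ 2))) ∂μ ≤
      ENNReal.ofReal (δ * D) := by
    simp_rw [ENNReal.ofReal_mul hK0]
    rw [lintegral_const_mul _ meas_g]
    calc ENNReal.ofReal K * ∫⁻ y, ENNReal.ofReal
          (Real.exp (-‖y - x‖ ^ 2 / (2 * (Real.sqrt 2 * R) ^ 2))) ∂μ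
        ≤ ENNReal.ofReal K * ENNReal.ofReal (C * (D * ω) * (Real.sqrt 2 * R) ^ (n - 1)) :=
          mul_le_mul_right happ _
      _ = ENNReal.ofReal (K * (C * (D * ω) * (Real.sqrt 2 * R) ^ (n - 1))) :=
          (ENNReal.ofReal_mul hK0).symm
      _ ≤ ENNReal.ofReal (δ * D) := ENNReal.ofReal_le_ofReal hfinal
  calc ∫⁻ y, ENNReal.ofReal
        (((A * R) ^ (n - 1))⁻¹ * Real.exp (-‖y - x‖ ^ 2 / (2 * R ^ 2))) ∂μ
      ≤ ∫⁻ y, (ENNReal.ofReal ((1 + δ) *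
            (((A * r) ^ (n - 1))⁻¹ * Real.exp (-‖y - x‖ ^ 2 / (2 * r ^ 2)))) +
          ENNReal.ofReal (K * Real.exp (-‖y - x‖ ^ 2 / (2 * (Real.sqrt 2 * R) ^ 2)))) ∂μ :=
        lintegral_mono hpt
    _ = (∫⁻ y, ENNReal.ofReal ((1 + δ) *
            (((A * r) ^ (n - 1))⁻¹ * Real.exp (-‖y - x‖ ^ 2 / (2 * r ^ 2)))) ∂μ) +
        ∫⁻ y, ENNReal.ofReal
            (K * Real.exp (-‖y - x‖ ^ 2 / (2 * (Real.sqrt 2 * R) ^ 2))) ∂μ :=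
        lintegral_add_left meas_f _
    _ ≤ ENNReal.ofReal (1 + δ) *
          (∫⁻ y, ENNReal.ofReal
            (((A * r) ^ (n - 1))⁻¹ * Real.exp (-‖y - x‖ ^ 2 / (2 * r ^ 2))) ∂μ) +
        ENNReal.ofReal (δ * D) := by
        refine add_le_add (le_of_eq ?_) htail
        simp_rw [ENNReal.ofReal_mul (by positivity : (0:ℝ) ≤ 1 + δ)]
        rw [lintegral_const_mul _ meas_r]
end

section
/- Let Ω ⊂ ℝⁿ be a bounded convex open set with smooth boundary and let c₂ > 0 be the reciprocal of the supremum of the principal curvatures of ∂Ω. For x in the interior tubular neighborhood N_{c₂} of ∂Ω, let ζ(x) ∈ ∂Ω be the nearest boundary point and define the reflection x̃ = 2ζ(x) − x. Then for every x in N_{c₂} and every y in the closure of Ω, |x̃ − y| ≥ |x − y|. -/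
open Set Metric RealInnerProductSpace

/-- If `x ∈ Ω` (open) and `w ∉ closure Ω`, the segment from `x` to `w` meets the frontier. -/
lemma segment_meets_frontier {E : Type*} [NormedAddCommGroup E] [NormedSpace ℝ E]
    {Ω : Set E} (hΩo : IsOpen Ω) {x w : E} (hx : x ∈ Ω) (hw : w ∉ closure Ω) :
    ∃ t : ℝ, t ∈ Icc (0:ℝ) 1 ∧ x + t • (w - x) ∈ frontier Ω := by
  set f : ℝ → E := fun t => x + t • (w - x) with hf
  have hfc : Continuous f := by fun_prop
  set S : Set ℝ := Icc (0:ℝ) 1 ∩ f ⁻¹' (closure Ω) with hS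
  have hS0 : (0:ℝ) ∈ S := by
    constructor
    · exact ⟨le_refl 0, zero_le_one⟩
    · simp only [mem_preimage, hf]
      simpa using subset_closure hx
  have hSbdd : BddAbove S := BddAbove.mono (fun t ht => ht.1) bddAbove_Icc
  have hSclosed : IsClosed S := (isClosed_Icc).inter (isClosed_closure.preimage hfc)
  set T := sSup S with hT
  have hTS : T ∈ S := hSclosed.csSup_mem ⟨0, hS0⟩ hSbdd
  have hT1 : T ≠ 1 := by
    intro h
    apply hw
    have := hTS.2
    simpa [h, hf] using this
  refine ⟨T, hTS.1, ?_, ?_⟩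
  · exact hTS.2
  · -- f T ∉ interior Ω = Ω
    rw [hΩo.interior_eq]
    intro hfT
    have hopen : IsOpen (f ⁻¹' Ω) := hΩo.preimage hfc
    obtain ⟨ε, hε, hball⟩ := Metric.isOpen_iff.1 hopen T hfT
    have hTlt : T < 1 := lt_of_le_of_ne hTS.1.2 hT1
    set t := min (T + ε / 2) 1 with ht
    have htT : T < t := lt_min (by linarith) hTlt
    have htS : t ∈ S := by
      constructor
      · exact ⟨le_trans hTS.1.1 htT.le, min_le_right _ _⟩
      · apply subset_closure
        apply hball
        rw [Metric.mem_ball, Real.dist_eq, abs_lt]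
        constructor
        · have := min_le_left (T + ε / 2) 1; linarith [htT]
        · have := min_le_left (T + ε / 2) 1; linarith
    exact absurd (le_csSup hSbdd htS) (not_le.2 htT)

theorem reflection_increases_distance
    (n : ℕ) (hn : 2 ≤ n) (Ω : Set (EuclideanSpace ℝ (Fin n)))
    (hΩo : IsOpen Ω) (hconv : Convex ℝ Ω) (hbd : Bornology.IsBounded Ω)
    (x : EuclideanSpace ℝ (Fin n)) (hx : x ∈ closure Ω)
    (z : EuclideanSpace ℝ (Fin n)) (hz : z ∈ frontier Ω)
    (hnear : ∀ w ∈ frontier Ω, dist x z ≤ dist x w)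
    (y : EuclideanSpace ℝ (Fin n)) (hy : y ∈ closure Ω) :
    ‖x - y‖ ≤ ‖((2 : ℝ) • z - x) - y‖ := by
  by_cases hxz : x = z
  · apply le_of_eq
    congr 1
    rw [hxz, two_smul]
    abel
  -- x is in Ω
  have hxΩ : x ∈ Ω := by
    by_contra hxn
    have hxf : x ∈ frontier Ω := by
      rw [hΩo.frontier_eq]; exact ⟨hx, hxn⟩
    have := hnear x hxf
    simp only [dist_self] at this
    exact hxz (dist_le_zero.1 this)
  set r := dist x z with hr
  have hrpos : 0 < r := dist_pos.2 hxz
  -- open ball of radius r around x is inside closure Ω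
  have hball : ball x r ⊆ closure Ω := by
    intro w hw
    by_contra hwn
    obtain ⟨t, ht, hfront⟩ := segment_meets_frontier hΩo hxΩ hwn
    have hd := hnear _ hfront
    have : dist x (x + t • (w - x)) = t * ‖w - x‖ := by
      rw [dist_eq_norm]
      simp [norm_smul, abs_of_nonneg ht.1]
    rw [this] at hd
    rw [mem_ball, dist_comm, dist_eq_norm] at hw
    nlinarith [ht.1, ht.2, norm_nonneg (w - x), norm_sub_rev x w]
  have hcball : closedBall x r ⊆ closure Ω := by
    rw [← closure_ball x hrpos.ne']
    exact closure_minimal hball isClosed_closure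
  -- separating hyperplane at z
  have hzΩ : z ∉ Ω := fun h => (hΩo.frontier_eq ▸ hz).2 h
  obtain ⟨f, hf⟩ := geometric_hahn_banach_open_point hconv hΩo hzΩ
  have hfcl : ∀ a ∈ closure Ω, f a ≤ f z := by
    intro a ha
    have : closure Ω ⊆ {a | f a ≤ f z} :=
      closure_minimal (fun a ha => (hf a ha).le) (isClosed_le f.continuous continuous_const)
    exact this ha
  set v := (InnerProductSpace.toDual ℝ (EuclideanSpace ℝ (Fin n))).symm f with hv
  have hvf : ∀ w, ⟪v, w⟫ = f w := fun w => InnerProductSpace.toDual_symm_apply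
  have hvne : v ≠ 0 := by
    intro h
    have := hf x hxΩ
    have hfx : f x = 0 := by rw [← hvf, h, inner_zero_left]
    have hfz : f z = 0 := by rw [← hvf, h, inner_zero_left]
    rw [hfx, hfz] at this; exact lt_irrefl _ this
  have hvnorm : 0 < ‖v‖ := norm_pos_iff.2 hvne
  -- the point x + (r/‖v‖) • v lies in the closed ball
  set p := x + (r * ‖v‖⁻¹) • v with hp
  have hpmem : p ∈ closedBall x r := by
    have hpx : p - x = (r * ‖v‖⁻¹) • v := by rw [hp]; abel
    rw [mem_closedBall, dist_eq_norm, hpx, norm_smul, Real.norm_eq_abs,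
      abs_of_nonneg (by positivity), mul_assoc, inv_mul_cancel₀ hvnorm.ne', mul_one]
  have hfp : f p ≤ f z := hfcl p (hcball hpmem)
  have hinner_p : ⟪v, p⟫ = ⟪v, x⟫ + r * ‖v‖ := by
    rw [hp, inner_add_right, real_inner_smul_right, real_inner_self_eq_norm_sq]
    congr 1
    field_simp
  -- equality in Cauchy-Schwarz
  have hrnorm : r = ‖z - x‖ := by rw [hr, dist_comm, dist_eq_norm]
  have hCS : ⟪v, z - x⟫ = ‖v‖ * ‖z - x‖ := by
    have h1 : ‖v‖ * ‖z - x‖ ≤ ⟪v, z - x⟫ := by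
      have := hfp
      rw [← hvf p, ← hvf z] at this
      rw [hinner_p] at this
      have h2 : ⟪v, z - x⟫ = ⟪v, z⟫ - ⟪v, x⟫ := inner_sub_right v z x
      rw [h2, hrnorm] at *
      linarith [this]
    linarith [real_inner_le_norm v (z - x)]
  have hdir : ‖z - x‖ • v = ‖v‖ • (z - x) := inner_eq_norm_mul_iff_real.1 (by rw [hCS])
  -- key inequality: ⟪z - x, y - z⟫ ≤ 0
  have hkey : ⟪z - x, y - z⟫ ≤ 0 := by
    have h1 : ⟪v, y - z⟫ ≤ 0 := by
      rw [inner_sub_right, hvf, hvf]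
      linarith [hfcl y hy]
    have h2 : ‖z - x‖ * ⟪v, y - z⟫ = ‖v‖ * ⟪z - x, y - z⟫ := by
      rw [← real_inner_smul_left, ← real_inner_smul_left, hdir]
    nlinarith [norm_nonneg (z - x), hvnorm]
  -- conclude via squared norms
  have hexp : ((2:ℝ) • z - x) - y = (x - y) + (2:ℝ) • (z - x) := by
    rw [two_smul, two_smul]; abel
  have hsq : ‖x - y‖ ^ 2 ≤ ‖((2:ℝ) • z - x) - y‖ ^ 2 := by
    rw [hexp]
    have := norm_add_sq_real (x - y) ((2:ℝ) • (z - x))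
    rw [real_inner_smul_right, norm_smul] at this
    have hzy : (x - y) + (z - x) = z - y := by abel
    have hinner : ⟪x - y, z - x⟫ + ‖z - x‖ ^ 2 = ⟪z - y, z - x⟫ := by
      rw [← hzy, inner_add_left, real_inner_self_eq_norm_sq]
    have hyz : ⟪z - y, z - x⟫ = -⟪z - x, y - z⟫ := by
      rw [real_inner_comm, ← inner_neg_right]
      congr 1; abel
    simp only [Real.norm_ofNat] at this
    nlinarith [hkey]
  have hs := Real.sqrt_le_sqrt hsq
  rwa [Real.sqrt_sq (norm_nonneg _), Real.sqrt_sq (norm_nonneg _)] at hs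
end

section
/- With the reflection x̃ = 2ζ(x) − x across ∂Ω in a tubular neighborhood, define the reflected backward heat kernel ρ̃(x,t) = (4π(s−t))^{−(n−1)/2} exp(−|x̃−y|²/(4(s−t))). Then for any unit vector a, (a·∇ρ̃)²/ρ̃ + (I − a⊗a)·∇²ρ̃ + ∂ₜρ̃ = Σ_{i,j,k} ((δ_{ij} − aᵢaⱼ) ∂_{x_j}(νᵢνₖ) (x̃ₖ − yₖ) / (s−t)) · ρ̃, where ν = ν(ζ(x)) is the outer unit normal at the projection point. In the computation one uses ∇|x̃−y|² = 2(I − 2ν⊗ν)(x̃−y) and ∇²_{ij}|x̃−y|² = 2δ_{ij} − 4Σₖ ∂_{x_j}(νᵢνₖ)(x̃ₖ−yₖ). -/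
/-!
The point reflection `m = 2ζ - id` has derivative the reflection `R` across `ν^⊥`, an
involutive isometry. Hence `f = ‖m - y‖²` has gradient `2 R (m - y)`, so `‖∇f‖² = 4 f`.
Differentiating the gradient once more, the derivative of `m` contributes `R ∘ R = I`, so
`∇²f = 2 I - 4 ∂(ν ⊗ ν) (m - y)`. For `ρ̃ = (4π(s-t))^(-(n-1)/2) exp(-f / (4(s-t)))`, the
term `‖∇f‖² / (16 (s-t)²)` of `(a·∇ρ̃)²/ρ̃ + (I - a⊗a)·∇²ρ̃` cancels the term
`-f / (4 (s-t)²)` of `∂ₜρ̃`, the two trace terms in `n - 1` cancel likewise, and only the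
curvature term `∂(ν ⊗ ν)` survives.
-/

open scoped RealInnerProductSpace BigOperators

open Real Submodule InnerProductSpace

section

variable {F : Type*} [NormedAddCommGroup F] [InnerProductSpace ℝ F]

theorem reflection_orthogonalComplement_singleton_apply_of_norm_eq_one {ν : F} (hν : ‖ν‖ = 1)
    (u : F) : reflection (ℝ ∙ ν)ᗮ u = u - (2 : ℝ) • (⟪ν, u⟫ • ν) := by
  rw [reflection_orthogonal_apply, reflection_singleton_apply, hν]
  simp only [one_pow, RCLike.ofReal_one, div_one, neg_sub]
  module

theorem hasFDerivAt_two_smul_sub_self {ζ : F → F} {ν z : F} (hν : ‖ν‖ = 1)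
    (hζ : DifferentiableAt ℝ ζ z) (hDζ : ∀ v, fderiv ℝ ζ z v = v - ⟪v, ν⟫ • ν) :
    HasFDerivAt (fun w => (2 : ℝ) • ζ w - w) (reflection (ℝ ∙ ν)ᗮ : F →L[ℝ] F) z := by
  refine (hζ.hasFDerivAt.const_smul (2 : ℝ) |>.sub (hasFDerivAt_id z)).congr_fderiv ?_
  ext v
  simp only [sub_apply, smul_apply, hDζ, ContinuousLinearMap.id_apply,
    LinearIsometryEquiv.coe_coe'', real_inner_comm v,
    reflection_orthogonalComplement_singleton_apply_of_norm_eq_one hν]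
  module

theorem hasGradientAt_norm_sub_sq_of_hasFDerivAt_reflection [CompleteSpace F] {m : F → F}
    {K : Submodule ℝ F} [K.HasOrthogonalProjection] {z : F}
    (hm : HasFDerivAt m (K.reflection : F →L[ℝ] F) z) (y : F) :
    HasGradientAt (fun w => ‖m w - y‖ ^ 2) ((2 : ℝ) • K.reflection (m z - y)) z := by
  refine (hm.sub_const y).norm_sq.congr_fderiv ?_
  ext v
  simp [LinearIsometryEquiv.inner_map_eq_flip, reflection_symm]

theorem hasFDerivAt_const_mul_exp_neg_div {f : F → ℝ} {f' : F →L[ℝ] ℝ} {z : F}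
    (hf : HasFDerivAt f f' z) (c d : ℝ) :
    HasFDerivAt (fun w => c * exp (-f w / d)) ((-(c * exp (-f z / d)) / d) • f') z := by
  have harg : HasFDerivAt (fun w => -f w / d) (-(d⁻¹ • f')) z := by
    simpa [div_eq_inv_mul, neg_smul] using hf.const_mul (-d⁻¹)
  refine (harg.exp.const_mul c).congr_fderiv ?_
  ext v
  simp only [smul_neg, neg_apply, smul_apply, smul_eq_mul]
  ring

theorem fderiv_fderiv_const_mul_exp_neg_div {f : F → ℝ} (hf : Differentiable ℝ f) {e x : F}
    {H : F →L[ℝ] ℝ} (hH : HasFDerivAt (fun z => fderiv ℝ f z e) H x) (c d : ℝ) (v : F) :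
    fderiv ℝ (fun z => fderiv ℝ (fun w => c * exp (-f w / d)) z e) x v =
      c * exp (-f x / d) * (fderiv ℝ f x v * fderiv ℝ f x e / d ^ 2 - H v / d) := by
  have hfirst (z : F) : fderiv ℝ (fun w => c * exp (-f w / d)) z e =
      -d⁻¹ * (c * exp (-f z / d) * fderiv ℝ f z e) := by
    rw [(hasFDerivAt_const_mul_exp_neg_div (hf z).hasFDerivAt c d).fderiv]
    simp only [smul_apply, smul_eq_mul, neg_mul]
    ring
  simp_rw [hfirst]
  rw [((hasFDerivAt_const_mul_exp_neg_div (hf x).hasFDerivAt c d).fun_mul hH).const_mul (-d⁻¹)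
    |>.fderiv]
  simp only [smul_add, neg_smul, add_apply, neg_apply, smul_apply, smul_eq_mul]
  ring

theorem hasDerivAt_rpow_mul_exp_neg_div {c s t : ℝ} (hc : 0 < c) (ht : t < s) (p q d : ℝ)
    (hd : d ≠ 0) :
    HasDerivAt (fun τ => (c * (s - τ)) ^ (-p) * exp (-q / (d * (s - τ))))
      ((c * (s - t)) ^ (-p) * exp (-q / (d * (s - t))) * (p / (s - t) - q / (d * (s - t) ^ 2)))
      t := by
  have hτ : 0 < s - t := sub_pos.mpr ht
  have hlin (a : ℝ) : HasDerivAt (fun τ => a * (s - τ)) (-a) t := by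
    simpa using ((hasDerivAt_id t).const_sub s).const_mul a
  have hpow := (hlin c).rpow_const (p := -p) (Or.inl (by positivity))
  have hexp := ((hasDerivAt_const t (-q)).fun_div (hlin d) (by positivity)).exp
  refine (hpow.mul hexp).congr_deriv ?_
  rw [Real.rpow_sub_one (by positivity)]
  field_simp
  ring

end

section

variable {ι : Type*} [Fintype ι]

local notation "E" => EuclideanSpace ℝ ι

theorem reflection_orthogonalComplement_singleton_apply_coord {ν : E} (hν : ‖ν‖ = 1) (u : E)
    (i : ι) : reflection (ℝ ∙ ν)ᗮ u i = u i - 2 * ∑ k, ν i * ν k * u k := by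
  rw [reflection_orthogonalComplement_singleton_apply_of_norm_eq_one hν]
  simp [PiLp.inner_apply, Finset.mul_sum, mul_comm, mul_assoc]

theorem hasFDerivAt_reflection_apply_coord {ν m : E → E} {x : E} (hν : ∀ z, ‖ν z‖ = 1)
    (hνx : DifferentiableAt ℝ ν x) (hm : HasFDerivAt m (reflection (ℝ ∙ ν x)ᗮ : E →L[ℝ] E) x)
    (y : E) (i : ι) :
    HasFDerivAt (fun z => reflection (ℝ ∙ ν z)ᗮ (m z - y) i)
      (EuclideanSpace.proj i -
        (2 : ℝ) • ∑ k, (m x k - y k) • fderiv ℝ (fun w => ν w i * ν w k) x) x := by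
  set R : E →L[ℝ] E := ((reflection (ℝ ∙ ν x)ᗮ : E ≃ₗᵢ[ℝ] E) : E →L[ℝ] E)
  have hcoord (j : ι) : HasFDerivAt (fun z => m z j - y j) ((EuclideanSpace.proj j).comp R) x :=
    ((EuclideanSpace.proj j).hasFDerivAt.comp x hm).sub_const (y j)
  have hνν (k : ι) : HasFDerivAt (fun w => ν w i * ν w k)
      (fderiv ℝ (fun w => ν w i * ν w k) x) x :=
    ((EuclideanSpace.proj i).differentiableAt.comp x hνx).mul
      ((EuclideanSpace.proj k).differentiableAt.comp x hνx) |>.hasFDerivAt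
  have hRR (v : E) : R v i - 2 * ∑ k, ν x i * ν x k * R v k = v i := by
    rw [← reflection_orthogonalComplement_singleton_apply_coord (hν x)]
    exact congrArg (· i) (reflection_reflection (ℝ ∙ ν x)ᗮ v)
  simp_rw [reflection_orthogonalComplement_singleton_apply_coord (hν _), PiLp.sub_apply]
  refine ((hcoord i).sub ((HasFDerivAt.fun_sum fun k _ => (hνν k).mul (hcoord k)).const_mul 2))
    |>.congr_fderiv ?_
  ext v
  simp only [sub_apply, add_apply, smul_apply, sum_apply, smul_eq_mul, smul_add,
    Finset.sum_add_distrib, ContinuousLinearMap.comp_apply, ContinuousLinearEquiv.coe_coe,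
    LinearIsometryEquiv.coe_toContinuousLinearEquiv, PiLp.proj_apply, Finset.mul_sum, ← hRR v, R]
  ring

theorem hasFDerivAt_fderiv_norm_sub_sq_single [DecidableEq ι] {ν m : E → E} {x : E}
    (hν : ∀ z, ‖ν z‖ = 1) (hνx : DifferentiableAt ℝ ν x)
    (hm : ∀ z, HasFDerivAt m (reflection (ℝ ∙ ν z)ᗮ : E →L[ℝ] E) z) (y : E) (i : ι) :
    HasFDerivAt (fun z => fderiv ℝ (fun w => ‖m w - y‖ ^ 2) z (EuclideanSpace.single i 1))
      ((2 : ℝ) • (EuclideanSpace.proj i -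
        (2 : ℝ) • ∑ k, (m x k - y k) • fderiv ℝ (fun w => ν w i * ν w k) x)) x := by
  have hgrad (z : E) : fderiv ℝ (fun w => ‖m w - y‖ ^ 2) z (EuclideanSpace.single i 1) =
      2 * reflection (ℝ ∙ ν z)ᗮ (m z - y) i := by
    rw [(hasGradientAt_norm_sub_sq_of_hasFDerivAt_reflection (hm z) y).hasFDerivAt.fderiv]
    simp [EuclideanSpace.inner_single_right]
  simp_rw [hgrad]
  exact (hasFDerivAt_reflection_apply_coord hν hνx (hm x) y i).const_mul 2

theorem fderiv_fderiv_norm_sub_sq_single [DecidableEq ι] {ν m : E → E} {x : E}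
    (hν : ∀ z, ‖ν z‖ = 1) (hνx : DifferentiableAt ℝ ν x)
    (hm : ∀ z, HasFDerivAt m (reflection (ℝ ∙ ν z)ᗮ : E →L[ℝ] E) z) (y : E) (i j : ι) :
    fderiv ℝ (fun z => fderiv ℝ (fun w => ‖m w - y‖ ^ 2) z (EuclideanSpace.single i 1)) x
        (EuclideanSpace.single j 1) =
      2 * (if i = j then (1 : ℝ) else 0) -
        4 * ∑ k, fderiv ℝ (fun w => ν w i * ν w k) x (EuclideanSpace.single j 1) *
          (m x k - y k) := by
  simp only [(hasFDerivAt_fderiv_norm_sub_sq_single hν hνx hm y i).fderiv, smul_apply, sub_apply,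
    PiLp.proj_apply, PiLp.single_apply, sum_apply, smul_eq_mul, mul_comm (m x _ - y _)]
  ring

theorem sum_sum_sub_outer_mul_mul [DecidableEq ι] (a b c : E) :
    ∑ i, ∑ j, ((if i = j then (1 : ℝ) else 0) - a i * a j) * (b i * c j) =
      ⟪b, c⟫ - ⟪b, a⟫ * ⟪c, a⟫ := by
  have hdiag : ∑ i, ∑ j, (if i = j then (1 : ℝ) else 0) * (b i * c j) = ⟪b, c⟫ := by
    simp [PiLp.inner_apply, mul_comm]
  have hrank : ∑ i, ∑ j, a i * a j * (b i * c j) = ⟪b, a⟫ * ⟪c, a⟫ := by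
    simp only [PiLp.inner_apply, RCLike.inner_apply, conj_trivial, Finset.sum_mul_sum]
    exact Fintype.sum_congr _ _ fun i => Fintype.sum_congr _ _ fun j => by ring
  simp only [sub_mul, Finset.sum_sub_distrib, hdiag, hrank]

theorem sum_sum_sub_outer_mul_ite [DecidableEq ι] (a : E) :
    ∑ i, ∑ j, ((if i = j then (1 : ℝ) else 0) - a i * a j) * (if j = i then 1 else 0) =
      Fintype.card ι - ‖a‖ ^ 2 := by
  rw [EuclideanSpace.real_norm_sq_eq]
  simp [sq]

/-- `D`, `D2 i j` and `Dt` stand for `a·∇ρ̃`, `∂ᵢ∂ⱼρ̃` and `∂ₜρ̃`; the Hessian of the phase enters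
as `∂ⱼ∂ᵢ`, which the symmetry of `I - a ⊗ a` absorbs. -/
theorem heat_identity_of_derivatives [DecidableEq ι] {a G : E} (ha : ‖a‖ = 1)
    {c : ι → ι → ι → ℝ} {u : ι → ℝ} {ρ τ q D Dt : ℝ} {D2 : ι → ι → ℝ} (hρ : ρ ≠ 0)
    (hτ : τ ≠ 0) (hG : ‖G‖ ^ 2 = 4 * q) (hD : D = -(ρ * ⟪G, a⟫) / (4 * τ))
    (hD2 : ∀ i j, D2 i j = ρ * (G i * G j / (4 * τ) ^ 2 -
      (2 * (if j = i then 1 else 0) - 4 * ∑ k, c j i k * u k) / (4 * τ)))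
    (hDt : Dt = ρ * ((Fintype.card ι - 1) / 2 / τ - q / (4 * τ ^ 2))) :
    D ^ 2 / ρ + ∑ i, ∑ j, ((if i = j then (1 : ℝ) else 0) - a i * a j) * D2 i j + Dt =
      (∑ i, ∑ j, ∑ k, ((if i = j then (1 : ℝ) else 0) - a i * a j) * c i j k * u k / τ) * ρ := by
  set W : ι → ι → ℝ := fun i j => (if i = j then (1 : ℝ) else 0) - a i * a j with hW
  show D ^ 2 / ρ + ∑ i, ∑ j, W i j * D2 i j + Dt =
    (∑ i, ∑ j, ∑ k, W i j * c i j k * u k / τ) * ρ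
  have hWsymm (i j : ι) : W j i = W i j := by simp only [hW, eq_comm (a := j), mul_comm]
  have hswap :
      ∑ i, ∑ j, W i j * ∑ k, c j i k * u k = ∑ i, ∑ j, W i j * ∑ k, c i j k * u k := by
    rw [Finset.sum_comm]
    simp only [hWsymm]
  have hterm (i j : ι) : W i j * D2 i j = ρ / (4 * τ) ^ 2 * (W i j * (G i * G j))
      - 2 * ρ / (4 * τ) * (W i j * if j = i then 1 else 0)
      + ρ / τ * (W i j * ∑ k, c j i k * u k) := by
    rw [hD2]
    field_simp
    ring
  have hrhs : ∑ i, ∑ j, ∑ k, W i j * c i j k * u k / τ =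
      (∑ i, ∑ j, W i j * ∑ k, c i j k * u k) / τ := by
    simp only [Finset.sum_div, Finset.mul_sum, mul_assoc]
  simp only [hterm, Finset.sum_add_distrib, Finset.sum_sub_distrib, ← Finset.mul_sum, hswap,
    hrhs]
  rw [hW, sum_sum_sub_outer_mul_mul, sum_sum_sub_outer_mul_ite, ha, real_inner_self_eq_norm_sq, hG,
    hD, hDt]
  field_simp
  ring

theorem gaussian_kernel_identity_of_hessian [DecidableEq ι] {f : E → ℝ} (hf : Differentiable ℝ f)
    {x G a : E} (hG : HasGradientAt f G x) (hGf : ‖G‖ ^ 2 = 4 * f x) (ha : ‖a‖ = 1)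
    {c : ι → ι → ι → ℝ} {u : ι → ℝ}
    (hHd : ∀ i, DifferentiableAt ℝ (fun z => fderiv ℝ f z (EuclideanSpace.single i 1)) x)
    (hH : ∀ i j, fderiv ℝ (fun z => fderiv ℝ f z (EuclideanSpace.single i 1)) x
      (EuclideanSpace.single j 1) = 2 * (if i = j then (1 : ℝ) else 0) - 4 * ∑ k, c i j k * u k)
    {s t : ℝ} (ht : t < s) (ρ : E → ℝ → ℝ)
    (hρ : ∀ w τ, ρ w τ = (4 * π * (s - τ)) ^ (-(((Fintype.card ι : ℝ) - 1) / 2)) *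
      exp (-f w / (4 * (s - τ)))) :
    (fderiv ℝ (fun z => ρ z t) x a) ^ 2 / ρ x t +
      (∑ i, ∑ j, ((if i = j then (1 : ℝ) else 0) - a i * a j) *
        fderiv ℝ (fun z => fderiv ℝ (fun w => ρ w t) z (EuclideanSpace.single j 1)) x
          (EuclideanSpace.single i 1)) +
      deriv (fun τ => ρ x τ) t =
    (∑ i, ∑ j, ∑ k, ((if i = j then (1 : ℝ) else 0) - a i * a j) * c i j k * u k / (s - t)) *
      ρ x t := by
  have hτ : 0 < s - t := sub_pos.mpr ht
  have hdf (v : E) : fderiv ℝ f x v = ⟪G, v⟫ := by rw [hG.hasFDerivAt.fderiv, toDual_apply_apply]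
  have hρt : (fun w => ρ w t) = fun w =>
      (4 * π * (s - t)) ^ (-(((Fintype.card ι : ℝ) - 1) / 2)) * exp (-f w / (4 * (s - t))) :=
    funext (hρ · t)
  have hρx : (fun τ => ρ x τ) = fun τ =>
      (4 * π * (s - τ)) ^ (-(((Fintype.card ι : ℝ) - 1) / 2)) * exp (-f x / (4 * (s - τ))) :=
    funext (hρ x)
  rw [hρt, hρx, (hasDerivAt_rpow_mul_exp_neg_div (by positivity) ht _ _ _ four_ne_zero).deriv,
    ← hρ]
  refine heat_identity_of_derivatives ha ?_ hτ.ne' hGf ?_ (fun i j => ?_) rfl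
  · rw [hρ]
    exact (mul_pos (rpow_pos_of_pos (mul_pos (by positivity) hτ) _) (exp_pos _)).ne'
  · rw [(hasFDerivAt_const_mul_exp_neg_div hG.hasFDerivAt _ _).fderiv, ← hρ]
    simp only [smul_apply, toDual_apply_apply, smul_eq_mul]
    ring
  · rw [fderiv_fderiv_const_mul_exp_neg_div hf (hHd j).hasFDerivAt, ← hρ, hdf, hdf, hH]
    simp only [EuclideanSpace.inner_single_right, conj_trivial, one_mul]

end

theorem reflected_backward_heat_kernel_identity_general
    (n : ℕ) (y : EuclideanSpace ℝ (Fin n)) (s : ℝ)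
    (ν : EuclideanSpace ℝ (Fin n) → EuclideanSpace ℝ (Fin n))
    (hν : ContDiff ℝ 1 ν) (hνunit : ∀ w, ‖ν w‖ = 1)
    (ζ : EuclideanSpace ℝ (Fin n) → EuclideanSpace ℝ (Fin n))
    (hζ : Differentiable ℝ ζ)
    (hDζ : ∀ w v, fderiv ℝ ζ w v = v - ⟪v, ν w⟫ • ν w)
    (m : EuclideanSpace ℝ (Fin n) → EuclideanSpace ℝ (Fin n))
    (hm : ∀ w, m w = (2 : ℝ) • ζ w - w)
    (ρ' : EuclideanSpace ℝ (Fin n) → ℝ → ℝ)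
    (hρ : ∀ w t, ρ' w t =
      (4 * Real.pi * (s - t)) ^ (-(((n : ℝ) - 1) / 2)) *
        Real.exp (-‖m w - y‖ ^ 2 / (4 * (s - t))))
    (x : EuclideanSpace ℝ (Fin n)) (t : ℝ) (ht : t < s)
    (a : EuclideanSpace ℝ (Fin n)) (ha : ‖a‖ = 1) :
    gradient (fun w => ‖m w - y‖ ^ 2) x =
        (2 : ℝ) • ((m x - y) - (2 : ℝ) • (⟪ν x, m x - y⟫ • ν x)) ∧
    (∀ i j : Fin n,
      fderiv ℝ (fun z => fderiv ℝ (fun w => ‖m w - y‖ ^ 2) z (EuclideanSpace.single i 1)) x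
          (EuclideanSpace.single j 1) =
        2 * (if i = j then (1 : ℝ) else 0) -
          4 * ∑ k : Fin n,
            fderiv ℝ (fun w => ν w i * ν w k) x (EuclideanSpace.single j 1) * (m x k - y k)) ∧
    (fderiv ℝ (fun z => ρ' z t) x a) ^ 2 / ρ' x t +
      (∑ i : Fin n, ∑ j : Fin n,
        ((if i = j then (1 : ℝ) else 0) - a i * a j) *
          fderiv ℝ (fun z => fderiv ℝ (fun w => ρ' w t) z (EuclideanSpace.single j 1)) x
            (EuclideanSpace.single i 1)) +
      deriv (fun τ => ρ' x τ) t =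
    (∑ i : Fin n, ∑ j : Fin n, ∑ k : Fin n,
        ((if i = j then (1 : ℝ) else 0) - a i * a j) *
          fderiv ℝ (fun w => ν w i * ν w k) x (EuclideanSpace.single j 1) *
          (m x k - y k) / (s - t)) * ρ' x t := by
  have hmD (z) : HasFDerivAt m (reflection (ℝ ∙ ν z)ᗮ : _ →L[ℝ] _) z :=
    funext hm ▸ hasFDerivAt_two_smul_sub_self (hνunit z) (hζ z) (hDζ z)
  have hgrad (z) := hasGradientAt_norm_sub_sq_of_hasFDerivAt_reflection (hmD z) y
  have hνx : DifferentiableAt ℝ ν x := hν.differentiable one_ne_zero x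
  have hhess := fderiv_fderiv_norm_sub_sq_single hνunit hνx hmD y
  refine ⟨?_, hhess, ?_⟩
  · rw [(hgrad x).gradient,
      reflection_orthogonalComplement_singleton_apply_of_norm_eq_one (hνunit x)]
  · refine gaussian_kernel_identity_of_hessian (fun z => (hgrad z).differentiableAt) (hgrad x)
      ?_ ha (fun i => (hasFDerivAt_fderiv_norm_sub_sq_single hνunit hνx hmD y i).differentiableAt)
      hhess ht ρ' (by simpa using hρ)
    rw [norm_smul, LinearIsometryEquiv.norm_map]
    norm_num
    ring

theorem reflected_backward_heat_kernel_identity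
    (n : ℕ) (hn : 2 ≤ n) (y : EuclideanSpace ℝ (Fin n)) (s : ℝ)
    (ν : EuclideanSpace ℝ (Fin n) → EuclideanSpace ℝ (Fin n))
    (hν : ContDiff ℝ 1 ν) (hνunit : ∀ w, ‖ν w‖ = 1)
    (ζ : EuclideanSpace ℝ (Fin n) → EuclideanSpace ℝ (Fin n))
    (hζ : Differentiable ℝ ζ)
    (hDζ : ∀ w v, fderiv ℝ ζ w v = v - ⟪v, ν w⟫ • ν w)
    (m : EuclideanSpace ℝ (Fin n) → EuclideanSpace ℝ (Fin n))
    (hm : ∀ w, m w = (2 : ℝ) • ζ w - w)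
    (ρ' : EuclideanSpace ℝ (Fin n) → ℝ → ℝ)
    (hρ : ∀ w t, ρ' w t =
      (4 * Real.pi * (s - t)) ^ (-(((n : ℝ) - 1) / 2)) *
        Real.exp (-‖m w - y‖ ^ 2 / (4 * (s - t))))
    (x : EuclideanSpace ℝ (Fin n)) (t : ℝ) (ht : t < s)
    (a : EuclideanSpace ℝ (Fin n)) (ha : ‖a‖ = 1) :
    gradient (fun w => ‖m w - y‖ ^ 2) x =
        (2 : ℝ) • ((m x - y) - (2 : ℝ) • (⟪ν x, m x - y⟫ • ν x)) ∧
    (∀ i j : Fin n,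
      fderiv ℝ (fun z => fderiv ℝ (fun w => ‖m w - y‖ ^ 2) z (EuclideanSpace.single i 1)) x
          (EuclideanSpace.single j 1) =
        2 * (if i = j then (1 : ℝ) else 0) -
          4 * ∑ k : Fin n,
            fderiv ℝ (fun w => ν w i * ν w k) x (EuclideanSpace.single j 1) * (m x k - y k)) ∧
    (fderiv ℝ (fun z => ρ' z t) x a) ^ 2 / ρ' x t +
      (∑ i : Fin n, ∑ j : Fin n,
        ((if i = j then (1 : ℝ) else 0) - a i * a j) *
          fderiv ℝ (fun z => fderiv ℝ (fun w => ρ' w t) z (EuclideanSpace.single j 1)) x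
            (EuclideanSpace.single i 1)) +
      deriv (fun τ => ρ' x τ) t =
    (∑ i : Fin n, ∑ j : Fin n, ∑ k : Fin n,
        ((if i = j then (1 : ℝ) else 0) - a i * a j) *
          fderiv ℝ (fun w => ν w i * ν w k) x (EuclideanSpace.single j 1) *
          (m x k - y k) / (s - t)) * ρ' x t :=
  reflected_backward_heat_kernel_identity_general n y s ν hν hνunit ζ hζ hDζ m hm ρ' hρ x t ht a ha
end

section
/- Let u : Ω × (0,∞) → ℝ be a smooth solution of ∂ₜu = Δu − W'(u) on a domain Ω ⊂ ℝⁿ, and let ξ = |∇u|²/2 − W(u) − G(u) for a C² function G. Then ξ satisfies ∂ₜξ − Δξ = W'(u)(W'(u) + G'(u)) − |∇²u|² + G''(u)|∇u|². -/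
set_option maxHeartbeats 1000000
set_option synthInstance.maxHeartbeats 1000000

open scoped BigOperators

open ContinuousLinearMap in
theorem aux_comp_inr {E F G : Type*} [NormedAddCommGroup E] [NormedSpace ℝ E]
    [NormedAddCommGroup F] [NormedSpace ℝ F] [NormedAddCommGroup G] [NormedSpace ℝ G]
    {f : E × F → G} {L : E × F →L[ℝ] G} {a : E} {b : F}
    (hf : HasFDerivAt f L (a, b)) :
    HasFDerivAt (fun y => f (a, y)) (L.comp (inr ℝ E F)) b :=
  hf.comp b ((hasFDerivAt_const a b).prodMk (hasFDerivAt_id b))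

open ContinuousLinearMap in
theorem aux_comp_inl {E F G : Type*} [NormedAddCommGroup E] [NormedSpace ℝ E]
    [NormedAddCommGroup F] [NormedSpace ℝ F] [NormedAddCommGroup G] [NormedSpace ℝ G]
    {f : E × F → G} {L : E × F →L[ℝ] G} {a : E} {b : F}
    (hf : HasFDerivAt f L (a, b)) :
    HasFDerivAt (fun s => f (s, b)) (L.comp (inl ℝ E F)) a :=
  hf.comp a ((hasFDerivAt_id a).prodMk (hasFDerivAt_const b a))


theorem aux_norm_gradient {n : ℕ} (f : EuclideanSpace ℝ (Fin n) → ℝ) (y : EuclideanSpace ℝ (Fin n)) :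
    ‖gradient f y‖ ^ 2 = ∑ i : Fin n, (fderiv ℝ f y (EuclideanSpace.single i 1)) ^ 2 := by
  have hg : ∀ i : Fin n, gradient f y i = fderiv ℝ f y (EuclideanSpace.single i 1) := by
    intro i
    have h1 : @inner ℝ _ _ (gradient f y) (EuclideanSpace.single i (1:ℝ)) =
        fderiv ℝ f y (EuclideanSpace.single i 1) := by
      rw [gradient]
      exact InnerProductSpace.toDual_symm_apply
    rw [← h1, EuclideanSpace.inner_single_right]
    simp
  rw [← real_inner_self_eq_norm_sq]
  rw [PiLp.inner_apply]
  simp [hg, sq]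

theorem aux_final {n : ℕ} (A : Fin n → ℝ) (Hm : Fin n → Fin n → ℝ)
    (Tm : Fin n → Fin n → Fin n → ℝ) (W1 W2 G1 G2 : ℝ)
    (hTS : ∀ i j, Tm i j j = Tm j j i) :
    2⁻¹ * (∑ i : Fin n, (((∑ j : Fin n, Tm i j j) - W2 * A i) * A i +
        A i * ((∑ j : Fin n, Tm i j j) - W2 * A i)))
      - W1 * ((∑ i : Fin n, Hm i i) - W1) - G1 * ((∑ i : Fin n, Hm i i) - W1)
      - (∑ j : Fin n, ((∑ i : Fin n, (Hm j i * Hm j i + A i * Tm j j i))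
          - ((W2 + G2) * (A j * A j) + (W1 + G1) * Hm j j)))
    = W1 * (W1 + G1) - (∑ i : Fin n, ∑ j : Fin n, Hm i j * Hm i j)
      + G2 * (∑ i : Fin n, A i * A i) := by
  have e2 : (∑ i : Fin n, A i * (∑ j : Fin n, Tm i j j))
      = ∑ j : Fin n, ∑ i : Fin n, A i * Tm j j i := by
    calc (∑ i : Fin n, A i * (∑ j : Fin n, Tm i j j))
        = ∑ i : Fin n, ∑ j : Fin n, A i * Tm i j j := by
          simp only [Finset.mul_sum]
      _ = ∑ i : Fin n, ∑ j : Fin n, A i * Tm j j i :=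
          Finset.sum_congr rfl fun i _ => Finset.sum_congr rfl fun j _ => by rw [hTS]
      _ = ∑ j : Fin n, ∑ i : Fin n, A i * Tm j j i := Finset.sum_comm
  have e1 : (∑ i : Fin n, (((∑ j : Fin n, Tm i j j) - W2 * A i) * A i +
        A i * ((∑ j : Fin n, Tm i j j) - W2 * A i)))
      = 2 * (∑ i : Fin n, A i * (∑ j : Fin n, Tm i j j)) - 2 * W2 * (∑ i : Fin n, A i * A i) := by
    rw [Finset.mul_sum, Finset.mul_sum, ← Finset.sum_sub_distrib]
    exact Finset.sum_congr rfl fun i _ => by ring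
  have e3 : (∑ j : Fin n, ((∑ i : Fin n, (Hm j i * Hm j i + A i * Tm j j i))
          - ((W2 + G2) * (A j * A j) + (W1 + G1) * Hm j j)))
      = (∑ j : Fin n, ∑ i : Fin n, Hm j i * Hm j i)
        + (∑ j : Fin n, ∑ i : Fin n, A i * Tm j j i)
        - ((W2 + G2) * (∑ j : Fin n, A j * A j) + (W1 + G1) * (∑ j : Fin n, Hm j j)) := by
    simp only [Finset.sum_add_distrib, Finset.sum_sub_distrib, ← Finset.mul_sum]
  rw [e1, e2, e3]
  ring

theorem aux_third_symm (E : Type*) [NormedAddCommGroup E] [NormedSpace ℝ E]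
    (f2 : E → E →L[ℝ] E →L[ℝ] ℝ) (f3 : E → E →L[ℝ] E →L[ℝ] E →L[ℝ] ℝ)
    (hf2' : ∀ p, HasFDerivAt f2 (f3 p) p)
    (S1 : ∀ p v w, f2 p v w = f2 p w v)
    (p a b c : E) :
    f3 p a b c = f3 p a c b := by
  have hA : HasFDerivAt (⇑((ContinuousLinearMap.compL ℝ E (E →L[ℝ] ℝ) ℝ) (ContinuousLinearMap.apply ℝ ℝ c)) ∘ f2)
      (((ContinuousLinearMap.compL ℝ E (E →L[ℝ] ℝ) ℝ) (ContinuousLinearMap.apply ℝ ℝ c)).comp (f3 p)) p :=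
    HasFDerivAt.comp (f := f2) p (ContinuousLinearMap.hasFDerivAt _) (hf2' p)
  have hB : HasFDerivAt (⇑(ContinuousLinearMap.apply ℝ (E →L[ℝ] ℝ) c) ∘ f2)
      ((ContinuousLinearMap.apply ℝ (E →L[ℝ] ℝ) c).comp (f3 p)) p :=
    HasFDerivAt.comp (f := f2) p (ContinuousLinearMap.hasFDerivAt _) (hf2' p)
  have hfg : (⇑((ContinuousLinearMap.compL ℝ E (E →L[ℝ] ℝ) ℝ) (ContinuousLinearMap.apply ℝ ℝ c)) ∘ f2)
      = (⇑(ContinuousLinearMap.apply ℝ (E →L[ℝ] ℝ) c) ∘ f2) := by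
    funext q
    apply ContinuousLinearMap.ext; intro v
    simpa using S1 q v c
  rw [hfg] at hA
  have h2 := hA.unique hB
  have h4 : (((ContinuousLinearMap.compL ℝ E (E →L[ℝ] ℝ) ℝ) (ContinuousLinearMap.apply ℝ ℝ c)).comp (f3 p)) a b
      = ((ContinuousLinearMap.apply ℝ (E →L[ℝ] ℝ) c).comp (f3 p)) a b := by rw [h2]
  simpa using h4

/- STATEMENT 12: for a smooth solution u of ∂ₜu = Δu − W'(u) on Ω and
ξ = |∇u|²/2 − W(u) − G(u), one has ∂ₜξ − Δξ = W'(u)(W'(u)+G'(u)) − |∇²u|² + G''(u)|∇u|². -/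
theorem discrepancy_parabolic_identity
    (n : ℕ) (hn : 2 ≤ n) (Ω : Set (EuclideanSpace ℝ (Fin n))) (hΩ : IsOpen Ω)
    (W G : ℝ → ℝ) (hW : ContDiff ℝ 2 W) (hG : ContDiff ℝ 2 G)
    (u : ℝ → EuclideanSpace ℝ (Fin n) → ℝ)
    (hu : ContDiff ℝ (⊤ : ℕ∞) (fun p : ℝ × EuclideanSpace ℝ (Fin n) => u p.1 p.2))
    (heq : ∀ t > (0 : ℝ), ∀ x ∈ Ω,
      deriv (fun τ => u τ x) t =
        (∑ i : Fin n,
          fderiv ℝ (fun z => fderiv ℝ (u t) z (EuclideanSpace.single i 1)) x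
            (EuclideanSpace.single i 1)) - deriv W (u t x))
    (ξ : ℝ → EuclideanSpace ℝ (Fin n) → ℝ)
    (hξ : ∀ t x, ξ t x = ‖gradient (u t) x‖ ^ 2 / 2 - W (u t x) - G (u t x))
    (t : ℝ) (ht : 0 < t) (x : EuclideanSpace ℝ (Fin n)) (hx : x ∈ Ω) :
    deriv (fun τ => ξ τ x) t -
      (∑ i : Fin n,
        fderiv ℝ (fun z => fderiv ℝ (ξ t) z (EuclideanSpace.single i 1)) x
          (EuclideanSpace.single i 1)) =
    deriv W (u t x) * (deriv W (u t x) + deriv G (u t x)) -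
      (∑ i : Fin n, ∑ j : Fin n,
        (fderiv ℝ (fun z => fderiv ℝ (u t) z (EuclideanSpace.single j 1)) x
            (EuclideanSpace.single i 1)) ^ 2) +
      deriv (deriv G) (u t x) * ‖gradient (u t) x‖ ^ 2 := by
  set F : ℝ × EuclideanSpace ℝ (Fin n) → ℝ := fun p : ℝ × EuclideanSpace ℝ (Fin n) => u p.1 p.2 with hF
  set f1 := fderiv ℝ F with hf1def
  set f2 := fderiv ℝ f1 with hf2def
  set f3 := fderiv ℝ f2 with hf3def
  have hf1c : ContDiff ℝ (⊤ : ℕ∞) f1 := hu.fderiv_right (by simp)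
  have hf2c : ContDiff ℝ (⊤ : ℕ∞) f2 := hf1c.fderiv_right (by simp)
  have hF' : ∀ p, HasFDerivAt F (f1 p) p := fun p =>
    ((hu.differentiable (by simp)) p).hasFDerivAt
  have hf1' : ∀ p, HasFDerivAt f1 (f2 p) p := fun p =>
    ((hf1c.differentiable (by simp)) p).hasFDerivAt
  have hf2' : ∀ p, HasFDerivAt f2 (f3 p) p := fun p =>
    ((hf2c.differentiable (by simp)) p).hasFDerivAt
  -- P1
  have P1 : ∀ (τ : ℝ) (y v : EuclideanSpace ℝ (Fin n)), fderiv ℝ (u τ) y v = f1 (τ, y) (0, v) := by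
    intro τ y v
    have h : HasFDerivAt (u τ) ((f1 (τ, y)).comp (ContinuousLinearMap.inr ℝ ℝ (EuclideanSpace ℝ (Fin n)))) y :=
      aux_comp_inr (hF' (τ, y))
    rw [h.fderiv]
    simp
  -- P2
  have P2 : ∀ (τ : ℝ) (y : EuclideanSpace ℝ (Fin n)), deriv (fun s => u s y) τ = f1 (τ, y) (1, 0) := by
    intro τ y
    have h : HasFDerivAt (fun s => u s y) ((f1 (τ, y)).comp (ContinuousLinearMap.inl ℝ ℝ (EuclideanSpace ℝ (Fin n)))) τ :=
      aux_comp_inl (hF' (τ, y))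
    rw [h.hasDerivAt.deriv]
    simp
  -- P0 : spatial HasFDerivAt of u τ
  have P0 : ∀ (τ : ℝ) (y : EuclideanSpace ℝ (Fin n)),
      HasFDerivAt (u τ) ((f1 (τ, y)).comp (ContinuousLinearMap.inr ℝ ℝ (EuclideanSpace ℝ (Fin n)))) y :=
    fun τ y => aux_comp_inr (hF' (τ, y))
  have P0t : ∀ (τ : ℝ) (y : EuclideanSpace ℝ (Fin n)),
      HasFDerivAt (fun s => u s y) ((f1 (τ, y)).comp (ContinuousLinearMap.inl ℝ ℝ (EuclideanSpace ℝ (Fin n)))) τ :=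
    fun τ y => aux_comp_inl (hF' (τ, y))
  -- P3 : spatial derivative of first derivatives
  have P3 : ∀ (τ : ℝ) (y : EuclideanSpace ℝ (Fin n)) (q : ℝ × EuclideanSpace ℝ (Fin n)),
      HasFDerivAt (fun z => f1 (τ, z) q)
        ((((f2 (τ, y)).comp (ContinuousLinearMap.inr ℝ ℝ (EuclideanSpace ℝ (Fin n)))).flip) q) y := by
    intro τ y q
    simpa using (aux_comp_inr (hf1' (τ, y))).clm_apply (hasFDerivAt_const q y)
  have P3t : ∀ (τ : ℝ) (y : EuclideanSpace ℝ (Fin n)) (q : ℝ × EuclideanSpace ℝ (Fin n)),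
      HasFDerivAt (fun s => f1 (s, y) q)
        ((((f2 (τ, y)).comp (ContinuousLinearMap.inl ℝ ℝ (EuclideanSpace ℝ (Fin n)))).flip) q) τ := by
    intro τ y q
    simpa using (aux_comp_inl (hf1' (τ, y))).clm_apply (hasFDerivAt_const q τ)
  -- P5 : spatial derivative of second derivatives
  have P5 : ∀ (τ : ℝ) (y : EuclideanSpace ℝ (Fin n)) (q r : ℝ × EuclideanSpace ℝ (Fin n)),
      HasFDerivAt (fun z => f2 (τ, z) q r)
        (((((f3 (τ, y)).comp (ContinuousLinearMap.inr ℝ ℝ (EuclideanSpace ℝ (Fin n)))).flip) q).flip r) y := by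
    intro τ y q r
    have h1 : HasFDerivAt (fun z => f2 (τ, z) q)
        ((((f3 (τ, y)).comp (ContinuousLinearMap.inr ℝ ℝ (EuclideanSpace ℝ (Fin n)))).flip) q) y := by
      simpa using HasFDerivAt.clm_apply (c := fun z => f2 (τ, z)) (aux_comp_inr (hf2' (τ, y))) (hasFDerivAt_const q y)
    simpa using h1.clm_apply (hasFDerivAt_const r y)
  -- evaluation sanity checks
  have ev1 : ∀ (τ : ℝ) (y w : EuclideanSpace ℝ (Fin n)) (q : ℝ × EuclideanSpace ℝ (Fin n)),
      ((((f2 (τ, y)).comp (ContinuousLinearMap.inr ℝ ℝ (EuclideanSpace ℝ (Fin n)))).flip) q) w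
        = f2 (τ, y) (0, w) q := by intro τ y w q; simp
  have ev2 : ∀ (τ : ℝ) (y w : EuclideanSpace ℝ (Fin n)) (q r : ℝ × EuclideanSpace ℝ (Fin n)),
      (((((f3 (τ, y)).comp (ContinuousLinearMap.inr ℝ ℝ (EuclideanSpace ℝ (Fin n)))).flip) q).flip r) w
        = f3 (τ, y) (0, w) q r := by intro τ y w q r; simp
  -- symmetry
  have S1 : ∀ (p v w : ℝ × EuclideanSpace ℝ (Fin n)), f2 p v w = f2 p w v :=
    fun p v w => second_derivative_symmetric hF' (hf1' p) v w
  have S3 : ∀ (p : ℝ × EuclideanSpace ℝ (Fin n)) (a b : ℝ × EuclideanSpace ℝ (Fin n)),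
      f3 p a b = f3 p b a := fun p a b => second_derivative_symmetric hf1' (hf2' p) a b
  have S2 : ∀ (p a b c : ℝ × EuclideanSpace ℝ (Fin n)), f3 p a b c = f3 p a c b :=
    fun p a b c => aux_third_symm _ f2 f3 hf2' S1 p a b c
  -- scalar calculus for W and G
  have hWd : ContDiff ℝ 1 (deriv W) := by
    have h2 : ContDiff ℝ (1 + 1) W := by norm_num; exact hW
    exact (contDiff_succ_iff_deriv.mp h2).2.2
  have hGd : ContDiff ℝ 1 (deriv G) := by
    have h2 : ContDiff ℝ (1 + 1) G := by norm_num; exact hG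
    exact (contDiff_succ_iff_deriv.mp h2).2.2
  have hW' : ∀ r : ℝ, HasDerivAt W (deriv W r) r := fun r =>
    ((hW.differentiable two_ne_zero) r).hasDerivAt
  have hG' : ∀ r : ℝ, HasDerivAt G (deriv G r) r := fun r =>
    ((hG.differentiable two_ne_zero) r).hasDerivAt
  have hW'' : ∀ r : ℝ, HasDerivAt (deriv W) (deriv (deriv W) r) r := fun r =>
    ((hWd.differentiable one_ne_zero) r).hasDerivAt
  have hG'' : ∀ r : ℝ, HasDerivAt (deriv G) (deriv (deriv G) r) r := fun r =>
    ((hGd.differentiable one_ne_zero) r).hasDerivAt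
  -- Q2 : identification of second spatial partials
  have Q2 : ∀ (τ : ℝ) (y : EuclideanSpace ℝ (Fin n)) (i j : Fin n),
      fderiv ℝ (fun z => fderiv ℝ (u τ) z (EuclideanSpace.single i 1)) y (EuclideanSpace.single j 1)
        = f2 (τ, y) (0, EuclideanSpace.single j 1) (0, EuclideanSpace.single i 1) := by
    intro τ y i j
    have hfun : (fun z => fderiv ℝ (u τ) z (EuclideanSpace.single i 1))
        = fun z => f1 (τ, z) (0, EuclideanSpace.single i 1) :=
      funext fun z => P1 τ z (EuclideanSpace.single i 1)
    rw [hfun, (P3 τ y (0, EuclideanSpace.single i 1)).fderiv]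
    simp
  -- E1 : the PDE at (t, x)
  have E1 : f1 (t, x) (1, 0) =
      (∑ i : Fin n, f2 (t, x) (0, EuclideanSpace.single i 1) (0, EuclideanSpace.single i 1))
        - deriv W (u t x) := by
    have h := heq t ht x hx
    rw [P2] at h
    simp only [Q2] at h
    exact h
  -- E2 : spatial derivative of the PDE at (t, x)
  have E2 : ∀ j : Fin n, f2 (t, x) (0, EuclideanSpace.single j 1) (1, 0) =
      (∑ i : Fin n, f3 (t, x) (0, EuclideanSpace.single j 1) (0, EuclideanSpace.single i 1)
        (0, EuclideanSpace.single i 1))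
        - deriv (deriv W) (u t x) * f1 (t, x) (0, EuclideanSpace.single j 1) := by
    intro j
    have hfeq : (fun y => f1 (t, y) (1, 0)) =ᶠ[nhds x]
        (fun y => (∑ i : Fin n, f2 (t, y) (0, EuclideanSpace.single i 1)
          (0, EuclideanSpace.single i 1)) - deriv W (u t y)) := by
      filter_upwards [hΩ.mem_nhds hx] with y hy
      have h := heq t ht y hy
      rw [P2] at h
      simp only [Q2] at h
      exact h
    have hd2 : HasFDerivAt (fun y => (∑ i : Fin n, f2 (t, y) (0, EuclideanSpace.single i 1)
        (0, EuclideanSpace.single i 1)) - deriv W (u t y)) _ x :=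
      (HasFDerivAt.fun_sum (fun i _ =>
        P5 t x (0, EuclideanSpace.single i 1) (0, EuclideanSpace.single i 1))).fun_sub
        ((hW'' (u t x)).comp_hasFDerivAt x (P0 t x))
    have hd1 : HasFDerivAt (fun y => f1 (t, y) (1, 0)) _ x := P3 t x (1, 0)
    have hd1' := hd1.congr_of_eventuallyEq hfeq.symm
    have huniq := hd2.unique hd1'
    have h4 := congrFun (congrArg (fun (L : EuclideanSpace ℝ (Fin n) →L[ℝ] ℝ) => (L : EuclideanSpace ℝ (Fin n) → ℝ)) huniq) (EuclideanSpace.single j 1)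
    simp only [ContinuousLinearMap.sum_apply, ContinuousLinearMap.flip_apply,
      ContinuousLinearMap.coe_comp', Function.comp_apply, ContinuousLinearMap.coe_sub',
      Pi.sub_apply, ContinuousLinearMap.smul_apply, smul_eq_mul,
      ContinuousLinearMap.inr_apply] at h4
    rw [← h4]
  -- time derivative of ξ
  have hUt : HasDerivAt (fun τ => u τ x) (f1 (t, x) (1, 0)) t := by
    simpa using (P0t t x).hasDerivAt
  have hAi : ∀ q : ℝ × EuclideanSpace ℝ (Fin n),
      HasDerivAt (fun τ => f1 (τ, x) q) (f2 (t, x) (1, 0) q) t := by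
    intro q
    simpa using (P3t t x q).hasDerivAt
  have hξx : (fun τ => ξ τ x) = fun τ =>
      (2⁻¹ : ℝ) * (∑ i : Fin n, f1 (τ, x) (0, EuclideanSpace.single i 1) *
        f1 (τ, x) (0, EuclideanSpace.single i 1)) - W (u τ x) - G (u τ x) := by
    funext τ
    rw [hξ τ x, aux_norm_gradient]
    simp only [P1, pow_two]
    ring
  have hDT' : HasDerivAt (fun τ =>
      (2⁻¹ : ℝ) * (∑ i : Fin n, f1 (τ, x) (0, EuclideanSpace.single i 1) *
        f1 (τ, x) (0, EuclideanSpace.single i 1)) - W (u τ x) - G (u τ x)) _ t :=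
    ((((HasDerivAt.fun_sum (fun i _ => (hAi (0, EuclideanSpace.single i 1)).fun_mul
      (hAi (0, EuclideanSpace.single i 1)))).const_mul (2⁻¹ : ℝ)).fun_sub
      ((hW' (u t x)).comp t hUt)).fun_sub ((hG' (u t x)).comp t hUt))
  rw [← hξx] at hDT'
  have DT := hDT'.deriv
  -- spatial first derivative of ξ t
  have hξt : ξ t = fun z =>
      (2⁻¹ : ℝ) * (∑ i : Fin n, f1 (t, z) (0, EuclideanSpace.single i 1) *
        f1 (t, z) (0, EuclideanSpace.single i 1)) - W (u t z) - G (u t z) := by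
    funext z
    rw [hξ t z, aux_norm_gradient]
    simp only [P1, pow_two]
    ring
  have SP : ∀ (y : EuclideanSpace ℝ (Fin n)) (w : EuclideanSpace ℝ (Fin n)),
      fderiv ℝ (ξ t) y w = (∑ i : Fin n, f1 (t, y) (0, EuclideanSpace.single i 1) *
          f2 (t, y) (0, w) (0, EuclideanSpace.single i 1))
        - (deriv W (u t y) + deriv G (u t y)) * f1 (t, y) (0, w) := by
    intro y w
    have h : HasFDerivAt (fun z =>
        (2⁻¹ : ℝ) * (∑ i : Fin n, f1 (t, z) (0, EuclideanSpace.single i 1) *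
          f1 (t, z) (0, EuclideanSpace.single i 1)) - W (u t z) - G (u t z)) _ y :=
      ((((HasFDerivAt.fun_sum (fun i _ => (P3 t y (0, EuclideanSpace.single i 1)).fun_mul
        (P3 t y (0, EuclideanSpace.single i 1)))).const_mul (2⁻¹ : ℝ)).fun_sub
        ((hW' (u t y)).comp_hasFDerivAt y (P0 t y))).fun_sub
        ((hG' (u t y)).comp_hasFDerivAt y (P0 t y)))
    rw [hξt, h.fderiv]
    simp only [ContinuousLinearMap.sub_apply, ContinuousLinearMap.add_apply,
      ContinuousLinearMap.smul_apply, ContinuousLinearMap.sum_apply,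
      ContinuousLinearMap.flip_apply, ContinuousLinearMap.coe_comp', Function.comp_apply,
      ContinuousLinearMap.inr_apply, smul_eq_mul, ContinuousLinearMap.coe_smul',
      Pi.smul_apply]
    simp only [← two_mul, ← Finset.mul_sum]
    ring
  -- second spatial derivatives of ξ t
  have DD : ∀ j : Fin n,
      fderiv ℝ (fun z => fderiv ℝ (ξ t) z (EuclideanSpace.single j 1)) x
        (EuclideanSpace.single j 1) =
      (∑ i : Fin n,
        (f2 (t, x) (0, EuclideanSpace.single j 1) (0, EuclideanSpace.single i 1) *
          f2 (t, x) (0, EuclideanSpace.single j 1) (0, EuclideanSpace.single i 1) +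
         f1 (t, x) (0, EuclideanSpace.single i 1) *
          f3 (t, x) (0, EuclideanSpace.single j 1) (0, EuclideanSpace.single j 1)
            (0, EuclideanSpace.single i 1)))
      - ((deriv (deriv W) (u t x) + deriv (deriv G) (u t x)) *
          (f1 (t, x) (0, EuclideanSpace.single j 1) * f1 (t, x) (0, EuclideanSpace.single j 1)) +
         (deriv W (u t x) + deriv G (u t x)) *
          f2 (t, x) (0, EuclideanSpace.single j 1) (0, EuclideanSpace.single j 1)) := by
    intro j
    have hfunj : (fun z => fderiv ℝ (ξ t) z (EuclideanSpace.single j 1)) = (fun z =>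
        (∑ i : Fin n, f1 (t, z) (0, EuclideanSpace.single i 1) *
          f2 (t, z) (0, EuclideanSpace.single j 1) (0, EuclideanSpace.single i 1))
        - (deriv W (u t z) + deriv G (u t z)) * f1 (t, z) (0, EuclideanSpace.single j 1)) :=
      funext fun z => SP z (EuclideanSpace.single j 1)
    have hD : HasFDerivAt (fun z =>
        (∑ i : Fin n, f1 (t, z) (0, EuclideanSpace.single i 1) *
          f2 (t, z) (0, EuclideanSpace.single j 1) (0, EuclideanSpace.single i 1))
        - (deriv W (u t z) + deriv G (u t z)) * f1 (t, z) (0, EuclideanSpace.single j 1)) _ x :=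
      (HasFDerivAt.fun_sum (fun i _ => (P3 t x (0, EuclideanSpace.single i 1)).fun_mul
        (P5 t x (0, EuclideanSpace.single j 1) (0, EuclideanSpace.single i 1)))).fun_sub
        ((((hW'' (u t x)).comp_hasFDerivAt x (P0 t x)).fun_add
          ((hG'' (u t x)).comp_hasFDerivAt x (P0 t x))).fun_mul (P3 t x (0, EuclideanSpace.single j 1)))
    rw [hfunj, hD.fderiv]
    simp only [ContinuousLinearMap.sub_apply, ContinuousLinearMap.add_apply,
      ContinuousLinearMap.smul_apply, ContinuousLinearMap.sum_apply,
      ContinuousLinearMap.flip_apply, ContinuousLinearMap.coe_comp', Function.comp_apply,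
      ContinuousLinearMap.inr_apply, smul_eq_mul, ContinuousLinearMap.coe_smul',
      Pi.smul_apply, Pi.add_apply]
    congr 1
    · exact Finset.sum_congr rfl fun i _ => by ring
    · ring
  -- symmetry consequences
  have ME : ∀ i : Fin n, f2 (t, x) (1, 0) (0, EuclideanSpace.single i 1) =
      (∑ j : Fin n, f3 (t, x) (0, EuclideanSpace.single i 1) (0, EuclideanSpace.single j 1)
        (0, EuclideanSpace.single j 1)) -
      deriv (deriv W) (u t x) * f1 (t, x) (0, EuclideanSpace.single i 1) := fun i =>
    (S1 (t, x) (1, 0) (0, EuclideanSpace.single i 1)).trans (E2 i)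
  have TS : ∀ i j : Fin n,
      f3 (t, x) (0, EuclideanSpace.single i 1) (0, EuclideanSpace.single j 1)
        (0, EuclideanSpace.single j 1) =
      f3 (t, x) (0, EuclideanSpace.single j 1) (0, EuclideanSpace.single j 1)
        (0, EuclideanSpace.single i 1) := by
    intro i j
    rw [S3 (t, x) (0, EuclideanSpace.single i 1) (0, EuclideanSpace.single j 1)]
    exact S2 _ _ _ _
  -- final assembly
  rw [DT, aux_norm_gradient]
  simp only [Q2]
  simp only [DD]
  simp only [ME, E1]
  simp only [P1]
  simp only [pow_two]
  exact aux_final (fun i => f1 (t, x) (0, EuclideanSpace.single i 1))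
    (fun i j => f2 (t, x) (0, EuclideanSpace.single i 1) (0, EuclideanSpace.single j 1))
    (fun i j k => f3 (t, x) (0, EuclideanSpace.single i 1) (0, EuclideanSpace.single j 1)
      (0, EuclideanSpace.single k 1))
    (deriv W (u t x)) (deriv (deriv W) (u t x)) (deriv G (u t x)) (deriv (deriv G) (u t x)) TS
end
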